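/- arXiv:2005.08214 — 7 statements merged into one kernel-verified Lean document; each statement's English description precedes it below -/
import Mathlib

section
/- Let P be an n×n partial Latin square that has r completely filled columns, one further column containing exactly s nonempty cells, and no other nonempty cells. If n ≥ 2r + s, then P is completable. -/
def IsPartialLatinSquare {n : ℕ} (P : Fin n → Fin n → Option (Fin n)) : Prop :=
  (∀ (i j j' : Fin n) (s : Fin n), P i j = some s → P i j' = some s → j = j') ∧
  (∀ (i i' j : Fin n) (s : Fin n), P i j = some s → P i' j = some s → i = i')

def IsLatinSquare {n : ℕ} (L : Fin n → Fin n → Fin n) : Prop :=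
  (∀ i : Fin n, Function.Injective (L i)) ∧
  (∀ j : Fin n, Function.Injective fun i => L i j)

def Completable {n : ℕ} (P : Fin n → Fin n → Option (Fin n)) : Prop :=
  ∃ L : Fin n → Fin n → Fin n, IsLatinSquare L ∧ ∀ i j s, P i j = some s → L i j = s

/-!
The empty cells of column `c` are filled first, by Hall's theorem. A row that is empty at `c`
contains at most `r` symbols, so at least `n - r - s` symbols fit into its cell in column `c`;
this settles Hall's condition for up to `n - r - s` rows. A symbol outside column `c` occurs in
at most `r` rows, so any set of more than `n - r - s ≥ r` rows jointly misses each of the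
`n - s` symbols outside column `c`, and there are at most `n - s` rows to fill.

What remains has `r + 1` full columns and nothing else, and such a partial Latin square is
completed one empty column at a time: if the full columns form a set `D`, every row misses
`n - #D` symbols and every symbol is missing from `n - #D` rows, so Hall's condition holds by
double counting.
-/

open Finset

theorem Finset.card_le_card_biUnion_of_biregular {ι α : Type*} [DecidableEq α] {s : Finset ι}
    {t : ι → Finset α} {k : ℕ} (hk : 0 < k) (ht : ∀ i ∈ s, k ≤ #(t i))
    (hdeg : ∀ a, #{i ∈ s | a ∈ t i} ≤ k) : #s ≤ #(s.biUnion t) := by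
  refine Nat.le_of_mul_le_mul_right (card_mul_le_card_mul (fun i a => a ∈ t i) ?_ ?_) hk
  · intro i hi
    rw [bipartiteAbove, filter_mem_eq_inter, inter_eq_right.2 (subset_biUnion_of_mem t hi)]
    exact ht i hi
  · exact fun a _ => hdeg a

theorem Finset.card_domain_eq_card_range_of_matching {α β : Type*} [Fintype α] [Fintype β]
    (R : α → β → Prop) [DecidablePred fun a => ∃ b, R a b]
    [DecidablePred fun b => ∃ a, R a b] (hR : ∀ a b b', R a b → R a b' → b = b')
    (hR' : ∀ a a' b, R a b → R a' b → a = a') :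
    #{a | ∃ b, R a b} = #{b | ∃ a, R a b} := by
  refine le_antisymm (card_le_card_of_forall_subsingleton R ?_ ?_)
    (card_le_card_of_forall_subsingleton' R ?_ ?_)
  · simpa using fun a b h => ⟨b, ⟨a, h⟩, h⟩
  · exact fun b _ a ha a' ha' => hR' a a' b ha.2 ha'.2
  · simpa using fun b a h => ⟨a, ⟨b, h⟩, h⟩
  · exact fun a _ b hb b' hb' => hR a b b' hb.2 hb'.2

section

variable {n : ℕ}

def rowSymbols (P : Fin n → Fin n → Option (Fin n)) (i : Fin n) : Finset (Fin n) :=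
  {x | ∃ j, P i j = some x}

def colSymbols (P : Fin n → Fin n → Option (Fin n)) (j : Fin n) : Finset (Fin n) :=
  {x | ∃ i, P i j = some x}

/-- The symbols that can be written into the cell `(i, c)`; note that the column comes first. -/
def availableSymbols (P : Fin n → Fin n → Option (Fin n)) (c i : Fin n) : Finset (Fin n) :=
  (rowSymbols P i ∪ colSymbols P c)ᶜ

def FillsExactlyColumns (P : Fin n → Fin n → Option (Fin n)) (D : Finset (Fin n)) : Prop :=
  (∀ j ∈ D, ∀ i, P i j ≠ none) ∧ ∀ j ∉ D, ∀ i, P i j = none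

theorem Completable.of_extends {P Q : Fin n → Fin n → Option (Fin n)} (hQ : Completable Q)
    (hPQ : ∀ i j x, P i j = some x → Q i j = some x) : Completable P :=
  let ⟨L, hL, hLQ⟩ := hQ
  ⟨L, hL, fun i j x h => hLQ i j x (hPQ i j x h)⟩

theorem fillsExactlyColumns_insert {P Q : Fin n → Fin n → Option (Fin n)} {D : Finset (Fin n)}
    {c : Fin n} (hfull : ∀ j ∈ D, ∀ i, P i j ≠ none) (hempty : ∀ j ∉ D, j ≠ c → ∀ i, P i j = none)
    (hQc : ∀ i, Q i c ≠ none) (hPQ : ∀ i j x, P i j = some x → Q i j = some x)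
    (hQ : ∀ j ≠ c, ∀ i, Q i j = P i j) : FillsExactlyColumns Q (insert c D) := by
  refine ⟨fun j hj i => ?_, fun j hj i => ?_⟩
  · obtain rfl | hjD := mem_insert.1 hj
    · exact hQc i
    · obtain ⟨x, hx⟩ := Option.ne_none_iff_exists'.1 (hfull j hjD i)
      simp [hPQ i j x hx]
  · obtain ⟨hjc, hjD⟩ := not_or.1 (mem_insert.not.1 hj)
    rw [hQ j hjc, hempty j hjD hjc]

namespace IsPartialLatinSquare

variable {P : Fin n → Fin n → Option (Fin n)} (hP : IsPartialLatinSquare P)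
include hP

theorem card_rowSymbols (i : Fin n) : #(rowSymbols P i) = #{j | P i j ≠ none} := by
  simp only [rowSymbols, Option.ne_none_iff_exists']
  exact (card_domain_eq_card_range_of_matching (fun j x => P i j = some x)
    (fun _ _ _ h h' => Option.some_injective _ (h.symm.trans h'))
    (fun j j' x => hP.1 i j j' x)).symm

theorem card_colSymbols (j : Fin n) : #(colSymbols P j) = #{i | P i j ≠ none} := by
  simp only [colSymbols, Option.ne_none_iff_exists']
  exact (card_domain_eq_card_range_of_matching (fun i x => P i j = some x)
    (fun _ _ _ h h' => Option.some_injective _ (h.symm.trans h'))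
    (fun i i' x => hP.2 i i' j x)).symm

theorem card_rows_eq_card_cols (x : Fin n) :
    #{i | ∃ j, P i j = some x} = #{j | ∃ i, P i j = some x} :=
  card_domain_eq_card_range_of_matching (fun i j => P i j = some x)
    (fun i j j' => hP.1 i j j' x) (fun i i' j => hP.2 i i' j x)

theorem colSymbols_eq_univ {j : Fin n} (hj : ∀ i, P i j ≠ none) : colSymbols P j = univ := by
  refine eq_univ_of_card _ ?_
  rw [hP.card_colSymbols, filter_true_of_mem fun i _ => hj i, card_univ]

theorem le_card_availableSymbols (c i : Fin n) :
    n - (#{j | P i j ≠ none} + #{i' | P i' c ≠ none}) ≤ #(availableSymbols P c i) := by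
  rw [availableSymbols, card_compl, Fintype.card_fin, ← hP.card_rowSymbols, ← hP.card_colSymbols]
  exact Nat.sub_le_sub_left (card_union_le _ _) n

theorem completable_of_forall_ne_none (hfull : ∀ i j, P i j ≠ none) : Completable P := by
  let L i j := (P i j).get (Option.isSome_iff_ne_none.2 (hfull i j))
  have hL : ∀ i j, P i j = some (L i j) := fun i j => (Option.some_get _).symm
  refine ⟨L, ⟨fun i j j' h => hP.1 i j j' _ (hL i j) (h ▸ hL i j'), fun j i i' h => ?_⟩,
    fun i j x h => Option.some_injective _ ((hL i j).symm.trans h)⟩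
  exact hP.2 i i' j _ (hL i j) ((show L i j = L i' j from h) ▸ hL i' j)

theorem exists_fill_column (c : Fin n)
    (hall : ∀ W : Finset (Fin n), (∀ i ∈ W, P i c = none) →
      #W ≤ #(W.biUnion (availableSymbols P c))) :
    ∃ Q, IsPartialLatinSquare Q ∧ (∀ i, Q i c ≠ none) ∧
      (∀ i j x, P i j = some x → Q i j = some x) ∧ ∀ j ≠ c, ∀ i, Q i j = P i j := by
  obtain ⟨g, hg_inj, hg⟩ :=
    (all_card_le_biUnion_card_iff_exists_injective fun i : {i // P i c = none} =>
      availableSymbols P c i).1 fun W => by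
        simpa [card_image_of_injective _ Subtype.val_injective, image_biUnion] using
          hall (W.image Subtype.val) (by simp +contextual)
  have hg_avail : ∀ i, (∀ j, P i.1 j ≠ some (g i)) ∧ ∀ i', P i' c ≠ some (g i) := fun i => by
    simpa [availableSymbols, rowSymbols, colSymbols] using hg i
  let Q i j := if h : j = c ∧ P i c = none then some (g ⟨i, h.2⟩) else P i j
  refine ⟨Q, ⟨?_, ?_⟩, ?_, ?_, ?_⟩
  · intro i j j' x h h'
    simp only [Q] at h h'
    split_ifs at h h' <;> grind [hP.1 i j j' x]
  · intro i i' j x h h'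
    simp only [Q] at h h'
    split_ifs at h h' <;> grind [hP.2 i i' j x]
  · intro i
    simp only [Q]
    split_ifs with h <;> grind
  · intro i j x h
    simp only [Q]
    split_ifs with h' <;> grind
  · intro j hj i
    simp [Q, hj]

theorem card_le_card_biUnion_availableSymbols_of_fillsExactlyColumns {D : Finset (Fin n)}
    (hD : FillsExactlyColumns P D) {c : Fin n} (hc : c ∉ D) (W : Finset (Fin n)) :
    #W ≤ #(W.biUnion (availableSymbols P c)) := by
  have hcempty : ∀ i, P i c = none := hD.2 c hc
  refine card_le_card_biUnion_of_biregular (k := n - #D) ?_ (fun i _ => ?_) (fun x => ?_)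
  · exact Nat.sub_pos_of_lt ((card_lt_univ_of_notMem hc).trans_eq (Fintype.card_fin n))
  · refine le_trans (Nat.sub_le_sub_left ?_ n) (hP.le_card_availableSymbols c i)
    simp only [hcempty, ne_eq, not_true_eq_false, filter_false, card_empty, add_zero]
    exact card_le_card fun j hj => by_contra fun hjD => (mem_filter.1 hj).2 (hD.2 j hjD i)
  · have hsub : D ⊆ ({j | ∃ i, P i j = some x} : Finset (Fin n)) := fun j hj => by
      have := hP.colSymbols_eq_univ (hD.1 j hj) ▸ mem_univ x
      simpa [colSymbols] using this
    calc #{i ∈ W | x ∈ availableSymbols P c i}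
        ≤ #({i | ∃ j, P i j = some x} : Finset (Fin n))ᶜ := card_le_card fun i hi => by
          simp_all [availableSymbols, rowSymbols]
      _ ≤ n - #D := by
          rw [card_compl, Fintype.card_fin, hP.card_rows_eq_card_cols]
          exact Nat.sub_le_sub_left (card_le_card hsub) n

theorem completable_of_fillsExactlyColumns {D : Finset (Fin n)}
    (hD : FillsExactlyColumns P D) : Completable P := by
  obtain ⟨m, hm⟩ : ∃ m, n - #D = m := ⟨_, rfl⟩
  induction m generalizing P D with
  | zero =>
    have hDuniv : D = univ :=
      eq_univ_of_card _ (le_antisymm (card_le_univ D) (by rw [Fintype.card_fin]; omega))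
    exact hP.completable_of_forall_ne_none fun i j => hD.1 j (hDuniv ▸ mem_univ j) i
  | succ m ih =>
    obtain ⟨c, hc⟩ : ∃ c, c ∉ D := by
      by_contra! h
      simp [eq_univ_of_forall h] at hm
    obtain ⟨Q, hQ, hQc, hPQ, hQP⟩ :=
      hP.exists_fill_column c fun W _ =>
        hP.card_le_card_biUnion_availableSymbols_of_fillsExactlyColumns hD hc W
    have hQD : FillsExactlyColumns Q (insert c D) :=
      fillsExactlyColumns_insert hD.1 (fun j hj _ => hD.2 j hj) hQc hPQ hQP
    exact (ih hQ hQD (by rw [card_insert_of_notMem hc]; omega)).of_extends hPQ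

theorem card_le_card_biUnion_availableSymbols_of_two_mul_add_le {C : Finset (Fin n)} {c : Fin n}
    (hempty : ∀ j ∉ C, j ≠ c → ∀ i, P i j = none)
    (hn : 2 * #C + #{i | P i c ≠ none} ≤ n) (W : Finset (Fin n)) (hW : ∀ i ∈ W, P i c = none) :
    #W ≤ #(W.biUnion (availableSymbols P c)) := by
  have hsupp : ∀ i j, P i j ≠ none → j ≠ c → j ∈ C := fun i j hij hjc =>
    by_contra fun hjC => hij (hempty j hjC hjc i)
  have hWcard : #W ≤ n - #{i | P i c ≠ none} := by
    calc #W ≤ #({i | P i c ≠ none} : Finset (Fin n))ᶜ := card_le_card fun i hi => by simp [hW i hi]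
      _ = n - #{i | P i c ≠ none} := by rw [card_compl, Fintype.card_fin]
  by_cases hsmall : #W ≤ n - (#C + #{i | P i c ≠ none})
  · obtain rfl | ⟨i, hi⟩ := W.eq_empty_or_nonempty
    · simp
    have hrow : #{j | P i j ≠ none} ≤ #C :=
      card_le_card fun j hj => hsupp i j (mem_filter.1 hj).2 fun hjc => by simp_all
    calc #W ≤ n - (#C + #{i | P i c ≠ none}) := hsmall
      _ ≤ n - (#{j | P i j ≠ none} + #{i | P i c ≠ none}) := by omega
      _ ≤ #(availableSymbols P c i) := hP.le_card_availableSymbols c i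
      _ ≤ #(W.biUnion (availableSymbols P c)) := card_le_card (subset_biUnion_of_mem _ hi)
  · have hmissing : ∀ x ∉ colSymbols P c, ∃ i ∈ W, x ∉ rowSymbols P i := by
      intro x hx
      by_contra! h
      have hcols : ({j | ∃ i, P i j = some x} : Finset (Fin n)) ⊆ C := fun j hj => by
        obtain ⟨i, hij⟩ := (mem_filter.1 hj).2
        exact hsupp i j (by simp [hij]) fun hjc => hx (mem_filter.2 ⟨mem_univ x, i, hjc ▸ hij⟩)
      have := (card_le_card fun i hi => by simpa [rowSymbols] using h i hi).trans
        ((hP.card_rows_eq_card_cols x).trans_le (card_le_card hcols))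
      omega
    calc #W ≤ n - #{i | P i c ≠ none} := hWcard
      _ ≤ #(colSymbols P c)ᶜ := by rw [card_compl, Fintype.card_fin, hP.card_colSymbols]
      _ ≤ #(W.biUnion (availableSymbols P c)) := card_le_card fun x hx => by
          obtain ⟨i, hi, hxi⟩ := hmissing x (mem_compl.1 hx)
          exact mem_biUnion.2 ⟨i, hi, by simp_all [availableSymbols]⟩

end IsPartialLatinSquare

end

theorem stmt_2_general (n r s : ℕ) (P : Fin n → Fin n → Option (Fin n))
    (hP : IsPartialLatinSquare P)
    (C : Finset (Fin n)) (hCcard : C.card = r)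
    (c : Fin n)
    (hfullC : ∀ j ∈ C, ∀ i : Fin n, P i j ≠ none)
    (hscard : (Finset.univ.filter fun i : Fin n => P i c ≠ none).card = s)
    (hempty : ∀ j : Fin n, j ∉ C → j ≠ c → ∀ i : Fin n, P i j = none)
    (hn : 2 * r + s ≤ n) :
    Completable P := by
  obtain ⟨Q, hQ, hQc, hPQ, hQP⟩ := hP.exists_fill_column c
    (hP.card_le_card_biUnion_availableSymbols_of_two_mul_add_le hempty (by omega))
  exact (hQ.completable_of_fillsExactlyColumns
    (fillsExactlyColumns_insert hfullC hempty hQc hPQ hQP)).of_extends hPQ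

/-- A partial Latin square of order `n` with `r` completely filled columns, one further
column containing exactly `s` nonempty cells, and no other nonempty cells, is
completable provided `n ≥ 2r + s`. -/
theorem stmt_2 (n r s : ℕ) (P : Fin n → Fin n → Option (Fin n))
    (hP : IsPartialLatinSquare P)
    (C : Finset (Fin n)) (hCcard : C.card = r)
    (c : Fin n) (hc : c ∉ C)
    (hfullC : ∀ j ∈ C, ∀ i : Fin n, P i j ≠ none)
    (hscard : (Finset.univ.filter fun i : Fin n => P i c ≠ none).card = s)
    (hempty : ∀ j : Fin n, j ∉ C → j ≠ c → ∀ i : Fin n, P i j = none)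
    (hn : 2 * r + s ≤ n) :
    Completable P :=
  stmt_2_general n r s P hP C hCcard c hfullC hscard hempty hn
end

section
/- For every r ≤ n, every n×n partial Latin square in which r columns are completely filled and every other cell is empty is completable. -/
open Finset

/-- A fully filled partial Latin square is completable. -/
lemma full_case {n : ℕ} (P : Fin n → Fin n → Option (Fin n))
    (hP : IsPartialLatinSquare P) (hfull : ∀ i j, P i j ≠ none) : Completable P := by
  have hsome : ∀ (i j d : Fin n), P i j = some ((P i j).getD d) := by
    intro i j d
    cases h : P i j with
    | none => exact absurd h (hfull i j)
    | some s => simp [h]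
  refine ⟨fun i j => (P i j).getD i, ⟨?_, ?_⟩, ?_⟩
  · intro i a b hab
    have hab' : (P i a).getD i = (P i b).getD i := hab
    have hb := hsome i b i
    rw [← hab'] at hb
    exact hP.1 i a b _ (hsome i a i) hb
  · intro j a b hab
    have hab' : (P a j).getD a = (P b j).getD b := hab
    have hb := hsome b j b
    rw [← hab'] at hb
    exact hP.2 a b j _ (hsome a j a) hb
  · intro i j s hs
    simp [hs]

/-- Key step: add one fully filled column using Hall's marriage theorem. -/
lemma step_lemma {n : ℕ} (P : Fin n → Fin n → Option (Fin n))
    (hP : IsPartialLatinSquare P) (C : Finset (Fin n)) (hC : C ≠ Finset.univ)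
    (hfill : ∀ i j, P i j ≠ none ↔ j ∈ C) :
    ∃ (P' : Fin n → Fin n → Option (Fin n)) (C' : Finset (Fin n)),
      IsPartialLatinSquare P' ∧ C'.card = C.card + 1 ∧
      (∀ i j, P' i j ≠ none ↔ j ∈ C') ∧ (∀ i j s, P i j = some s → P' i j = some s) := by
  classical
  -- the set of symbols missing from row i
  set A : Fin n → Finset (Fin n) :=
    fun i => Finset.univ.filter (fun s => ∀ j ∈ C, P i j ≠ some s) with hA
  have hmemA : ∀ i s, s ∈ A i ↔ ∀ j ∈ C, P i j ≠ some s := by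
    intro i s; simp [hA]
  have hv : ∀ i j, j ∈ C → ∃ s, P i j = some s := by
    intro i j hj
    have := (hfill i j).2 hj
    cases h : P i j with
    | none => exact absurd h this
    | some s => exact ⟨s, rfl⟩
  have hrn : C.card < n := by
    have hlt : C ⊂ Finset.univ := lt_of_le_of_ne (Finset.subset_univ C) hC
    simpa using Finset.card_lt_card hlt
  -- card of A i
  have hucard : (Finset.univ : Finset (Fin n)).card = n := by simp
  have hAcard : ∀ i, (A i).card = n - C.card := by
    intro i
    have himg : A i = Finset.univ \ C.image (fun j => (P i j).getD ⟨0, lt_of_le_of_lt (Nat.zero_le _) hrn⟩) := by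
      ext s
      rw [hmemA, Finset.mem_sdiff]
      constructor
      · refine fun h => ⟨Finset.mem_univ s, fun hmem => ?_⟩
        obtain ⟨j, hj, hjs⟩ := Finset.mem_image.mp hmem
        obtain ⟨t, ht⟩ := hv i j hj
        apply h j hj
        rw [ht] at hjs ⊢
        simp only [Option.getD_some] at hjs
        rw [hjs]
      · intro h j hj hjs
        exact h.2 (Finset.mem_image.mpr ⟨j, hj, by rw [hjs]; rfl⟩)
    rw [himg, Finset.card_sdiff_of_subset (Finset.subset_univ _), hucard,
      Finset.card_image_of_injOn]
    intro a ha b hb hab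
    have ha' := Finset.mem_coe.mp ha
    have hb' := Finset.mem_coe.mp hb
    obtain ⟨s, hs⟩ := hv i a ha'
    obtain ⟨t, ht⟩ := hv i b hb'
    have hab' : (P i a).getD _ = (P i b).getD _ := hab
    rw [hs, ht] at hab'; simp only [Option.getD_some] at hab'
    exact hP.1 i a b s hs (by rw [ht, hab'])
  -- for each symbol s and column j ∈ C there is a unique row containing s in column j
  have hcol : ∀ j ∈ C, ∀ s : Fin n, ∃! i, P i j = some s := by
    intro j hj s
    have hinj : Function.Injective (fun i => (P i j).getD ⟨0, lt_of_le_of_lt (Nat.zero_le _) hrn⟩) := by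
      intro a b hab
      obtain ⟨u, hu⟩ := hv a j hj
      obtain ⟨w, hw⟩ := hv b j hj
      have hab' : (P a j).getD _ = (P b j).getD _ := hab
      rw [hu, hw] at hab'; simp only [Option.getD_some] at hab'
      exact hP.2 a b j u hu (by rw [hw, hab'])
    obtain ⟨i, hi⟩ := (Finite.injective_iff_bijective.mp hinj).2 s
    obtain ⟨u, hu⟩ := hv i j hj
    have hi' : (P i j).getD _ = s := hi
    rw [hu] at hi'; simp only [Option.getD_some] at hi'
    have hPis : P i j = some s := by rw [hu, hi']
    refine ⟨i, hPis, fun y hy => hP.2 y i j s hy hPis⟩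
  -- each symbol is missing from exactly n - C.card rows
  have hBcard : ∀ s : Fin n,
      (Finset.univ.filter (fun i => ∃ j ∈ C, P i j = some s)).card = C.card := by
    intro s
    have himg : Finset.univ.filter (fun i => ∃ j ∈ C, P i j = some s)
        = C.attach.image (fun j => (hcol j.1 j.2 s).choose) := by
      ext i
      simp only [Finset.mem_filter, Finset.mem_univ, true_and, Finset.mem_image,
        Finset.mem_attach, exists_true_left]
      constructor
      · rintro ⟨j, hj, hjs⟩
        exact ⟨⟨j, hj⟩, ((hcol j hj s).choose_spec.2 i hjs).symm⟩
      · rintro ⟨⟨j, hj⟩, rfl⟩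
        exact ⟨j, hj, (hcol j hj s).choose_spec.1⟩
    rw [himg, Finset.card_image_of_injOn, Finset.card_attach]
    rintro ⟨a, ha⟩ _ ⟨b, hb⟩ _ hab
    simp only at hab
    have h1 := (hcol a ha s).choose_spec.1
    have h2 := (hcol b hb s).choose_spec.1
    rw [hab] at h1
    have := hP.1 _ a b s h1 h2
    exact Subtype.ext this
  have hA2card : ∀ s : Fin n,
      (Finset.univ.filter (fun i => s ∈ A i)).card = n - C.card := by
    intro s
    have : Finset.univ.filter (fun i => s ∈ A i)
        = Finset.univ \ Finset.univ.filter (fun i => ∃ j ∈ C, P i j = some s) := by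
      ext i
      simp only [Finset.mem_filter, Finset.mem_univ, true_and, Finset.mem_sdiff, hmemA]
      push_neg
      rfl
    rw [this, Finset.card_sdiff_of_subset (Finset.filter_subset _ _), hucard, hBcard]
  -- Hall's condition
  have hall : ∀ S : Finset (Fin n), S.card ≤ (S.biUnion A).card := by
    intro S
    have hm0 : 0 < n - C.card := Nat.sub_pos_of_lt hrn
    have key : S.card * (n - C.card) ≤ (S.biUnion A).card * (n - C.card) := by
      calc S.card * (n - C.card) = ∑ i ∈ S, (A i).card := by
            rw [Finset.sum_congr rfl (fun i _ => hAcard i), Finset.sum_const, smul_eq_mul]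
        _ = ∑ i ∈ S, ((S.biUnion A).filter (fun s => s ∈ A i)).card := by
            refine Finset.sum_congr rfl (fun i hi => ?_)
            rw [Finset.filter_mem_eq_inter, Finset.inter_eq_right.mpr
              (fun s hs => Finset.mem_biUnion.mpr ⟨i, hi, hs⟩)]
        _ = ∑ i ∈ S, ∑ s ∈ S.biUnion A, ite (s ∈ A i) 1 0 :=
            Finset.sum_congr rfl (fun i _ => Finset.card_filter _ _)
        _ = ∑ s ∈ S.biUnion A, ∑ i ∈ S, ite (s ∈ A i) 1 0 := Finset.sum_comm
        _ = ∑ s ∈ S.biUnion A, (S.filter (fun i => s ∈ A i)).card :=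
            Finset.sum_congr rfl (fun s _ => (Finset.card_filter _ _).symm)
        _ ≤ ∑ _s ∈ S.biUnion A, (n - C.card) := by
            refine Finset.sum_le_sum (fun s _ => ?_)
            rw [← hA2card s]
            exact Finset.card_le_card (Finset.filter_subset_filter _ (Finset.subset_univ S))
        _ = (S.biUnion A).card * (n - C.card) := by
            rw [Finset.sum_const, smul_eq_mul]
    exact Nat.le_of_mul_le_mul_right key hm0
  obtain ⟨f, hfinj, hfmem⟩ := (Finset.all_card_le_biUnion_card_iff_exists_injective A).mp hall
  obtain ⟨j0, hj0⟩ : ∃ j0, j0 ∉ C := by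
    by_contra h
    push_neg at h
    exact hC (Finset.eq_univ_of_forall h)
  have hfA : ∀ i, ∀ j ∈ C, P i j ≠ some (f i) := fun i => (hmemA i (f i)).1 (hfmem i)
  refine ⟨fun i j => if j = j0 then some (f i) else P i j, insert j0 C, ⟨?_, ?_⟩,
    Finset.card_insert_of_notMem hj0, ?_, ?_⟩
  · intro i j j' s h h'
    by_cases hj : j = j0 <;> by_cases hj' : j' = j0 <;>
      simp only [hj, hj', if_pos, if_neg, if_true, reduceIte] at h h'
    · rw [hj, hj']
    · exfalso
      have hmem : j' ∈ C := (hfill i j').1 (by rw [h']; exact Option.some_ne_none s)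
      simp only [Option.some.injEq] at h
      exact hfA i j' hmem (by rw [h', h])
    · exfalso
      have hmem : j ∈ C := (hfill i j).1 (by rw [h]; exact Option.some_ne_none s)
      simp only [Option.some.injEq] at h'
      exact hfA i j hmem (by rw [h, h'])
    · exact hP.1 i j j' s h h'
  · intro i i' j s h h'
    by_cases hj : j = j0
    · simp only [hj, if_pos, reduceIte, Option.some.injEq] at h h'
      exact hfinj (h.trans h'.symm)
    · simp only [hj, if_pos, if_neg, if_true, reduceIte] at h h'
      exact hP.2 i i' j s h h'
  · intro i j
    by_cases hj : j = j0
    · simp [hj]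
    · simp only [hj, if_pos, if_neg, if_true, reduceIte, Finset.mem_insert]
      constructor
      · exact fun h => Or.inr ((hfill i j).1 h)
      · rintro (h | h)
        · exact h.elim
        · exact (hfill i j).2 h
  · intro i j s hs
    have hj : j ∈ C := (hfill i j).1 (by rw [hs]; exact Option.some_ne_none s)
    have hjne : j ≠ j0 := fun h => hj0 (h ▸ hj)
    show (if j = j0 then some (f i) else P i j) = some s
    rw [if_neg hjne]
    exact hs

lemma complete_aux : ∀ k : ℕ, ∀ {n : ℕ} (P : Fin n → Fin n → Option (Fin n)),
    IsPartialLatinSquare P → ∀ C : Finset (Fin n), n - C.card ≤ k →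
    (∀ i j, P i j ≠ none ↔ j ∈ C) → Completable P := by
  intro k
  induction k with
  | zero =>
    intro n P hP C hk hfill
    have : C = Finset.univ := by
      apply Finset.eq_univ_of_card
      have h1 : C.card ≤ n := by simpa using Finset.card_le_card (Finset.subset_univ C)
      have h2 : n ≤ C.card := Nat.le_of_sub_eq_zero (Nat.le_zero.mp hk)
      rw [Fintype.card_fin]
      omega
    exact full_case P hP (fun i j => (hfill i j).2 (this ▸ Finset.mem_univ j))
  | succ k ih =>
    intro n P hP C hk hfill
    by_cases hCu : C = Finset.univ
    · exact full_case P hP (fun i j => (hfill i j).2 (hCu ▸ Finset.mem_univ j))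
    · obtain ⟨P', C', hP', hcard, hfill', hagree⟩ := step_lemma P hP C hCu hfill
      have hCn : C.card < n := by
        have hlt : C ⊂ Finset.univ := lt_of_le_of_ne (Finset.subset_univ C) hCu
        simpa using Finset.card_lt_card hlt
      have hk' : n - C'.card ≤ k := by
        rw [hcard]
        omega
      obtain ⟨L, hL, hLP⟩ := ih P' hP' C' hk' hfill'
      exact ⟨L, hL, fun i j s hs => hLP i j s (hagree i j s hs)⟩

/-- (M. Hall) For every `r ≤ n`, every `n × n` partial Latin square in which `r` columns
are completely filled and every other cell is empty is completable. -/
theorem stmt_4 (n r : ℕ) (hr : r ≤ n) (P : Fin n → Fin n → Option (Fin n))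
    (hP : IsPartialLatinSquare P)
    (C : Finset (Fin n)) (hCcard : C.card = r)
    (hfill : ∀ i j : Fin n, P i j ≠ none ↔ j ∈ C) :
    Completable P := by
  exact complete_aux n P hP C (Nat.sub_le n C.card) hfill
end

section
/- Let P be a partial Latin square of order n and define the partial Latin square T(P) of order n+1 by: T(P)(r+1,c) = P(r,c) for every nonempty cell (r,c) of P with c < r; T(P)(i,i) = n+1 for every i ∈ {1,…,n+1}; and every other cell of T(P) is empty. If P is completable, then T(P) is completable. -/
namespace Smet

variable {n : ℕ}

/-- `L` extended to `ℕ → ℕ → Fin (n+1)` (garbage `last n` out of range). -/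
def E (L : Fin n → Fin n → Fin n) (k c : ℕ) : Fin (n + 1) :=
  if h : k < n ∧ c < n then (L ⟨k, h.1⟩ ⟨c, h.2⟩).castLE (Nat.le_succ n) else Fin.last n

lemma E_ne_last (L : Fin n → Fin n → Fin n) {k c : ℕ} (hk : k < n) (hc : c < n) :
    E L k c ≠ Fin.last n := by
  intro h
  have : (E L k c).val = n := by rw [h, Fin.val_last]
  rw [E, dif_pos (⟨hk, hc⟩ : k < n ∧ c < n)] at this
  simp only [Fin.coe_castLE] at this
  have h2 := (L ⟨k, hk⟩ ⟨c, hc⟩).isLt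
  omega

lemma E_injr {L : Fin n → Fin n → Fin n} (hL : IsLatinSquare L) {k c c' : ℕ}
    (hk : k < n) (hc : c < n) (hc' : c' < n) (h : E L k c = E L k c') : c = c' := by
  rw [E, E, dif_pos (⟨hk, hc⟩ : k < n ∧ c < n), dif_pos (⟨hk, hc'⟩ : k < n ∧ c' < n)] at h
  have h2 : L ⟨k, hk⟩ ⟨c, hc⟩ = L ⟨k, hk⟩ ⟨c', hc'⟩ := by
    apply Fin.castLE_injective _ h
  have := hL.1 ⟨k, hk⟩ h2
  exact congrArg Fin.val this

lemma E_injc {L : Fin n → Fin n → Fin n} (hL : IsLatinSquare L) {k k' c : ℕ}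
    (hk : k < n) (hk' : k' < n) (hc : c < n) (h : E L k c = E L k' c) : k = k' := by
  rw [E, E, dif_pos (⟨hk, hc⟩ : k < n ∧ c < n), dif_pos (⟨hk', hc⟩ : k' < n ∧ c < n)] at h
  have h2 : L ⟨k, hk⟩ ⟨c, hc⟩ = L ⟨k', hk'⟩ ⟨c, hc⟩ := by
    apply Fin.castLE_injective _ h
  have := hL.2 ⟨c, hc⟩ h2
  exact congrArg Fin.val this

/-- Invariant after the rows `1..i` of the new square have been fully placed. -/
structure SInv (L : Fin n → Fin n → Fin n) (i : ℕ) (g : ℕ → ℕ → Fin (n + 1)) : Prop where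
  diag : ∀ r, 1 ≤ r → r ≤ i → g r r = Fin.last n
  fixed : ∀ r c, 1 ≤ r → r ≤ i → c + 2 ≤ r → g r c = E L (r - 1) c
  rowinj : ∀ r, 1 ≤ r → r ≤ i → ∀ c c', c ≤ n → c' ≤ n → g r c = g r c' → c = c'
  colinj : ∀ c, c ≤ n → ∀ r r', 1 ≤ r → r ≤ i → 1 ≤ r' → r' ≤ i → g r c = g r' c → r = r'
  form : ∀ r c, 1 ≤ r → r ≤ i → c < n → c ≠ r → ∃ k, k < i ∧ g r c = E L k c
  dflt : ∀ r c, 1 ≤ r → r ≤ i → i < c → c < n → g r c = E L (r - 1) c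


open Classical in
private lemma swap_lemma {β γ : Type*} [DecidableEq β] :
    ∀ (A : Finset β) (f t : β → γ) (x : γ),
      Set.InjOn f ↑A → Set.InjOn t ↑A → (∀ r ∈ A, t r ≠ x) →
      ∃ R : Finset β, R ⊆ A ∧
        Set.InjOn (fun r => if r ∈ R then t r else f r) ↑A ∧
        (∀ r ∈ A, (if r ∈ R then t r else f r) ≠ x) ∧
        Set.InjOn (fun r => if r ∈ R then f r else t r) ↑A ∧
        (∀ r ∈ R, f r = x ∨ ∃ r' ∈ A, f r = t r') := by
  intro A
  induction A using Finset.strongInduction with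
  | _ A ih =>
  intro f t x hf ht htx
  by_cases hx : ∃ r₀ ∈ A, f r₀ = x
  · obtain ⟨r₀, hr₀A, hfr₀⟩ := hx
    have hss : A.erase r₀ ⊂ A := Finset.erase_ssubset hr₀A
    have hsub : A.erase r₀ ⊆ A := Finset.erase_subset _ _
    have hsub' : ((A.erase r₀ : Finset β) : Set β) ⊆ (A : Set β) := by
      intro a ha; exact hsub ha
    obtain ⟨R', hR'sub, hF', hFx', hT', hfR'⟩ :=
      ih (A.erase r₀) hss f t (t r₀) (hf.mono hsub') (ht.mono hsub')
        (fun r hr he => (Finset.ne_of_mem_erase hr) (ht (hsub hr) hr₀A he))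
    have hFeq : ∀ r ∈ A.erase r₀,
        (if r ∈ insert r₀ R' then t r else f r) = (if r ∈ R' then t r else f r) := by
      intro r hr
      by_cases h : r ∈ R' <;> simp [Finset.mem_insert, Finset.ne_of_mem_erase hr, h]
    have hTeq : ∀ r ∈ A.erase r₀,
        (if r ∈ insert r₀ R' then f r else t r) = (if r ∈ R' then f r else t r) := by
      intro r hr
      by_cases h : r ∈ R' <;> simp [Finset.mem_insert, Finset.ne_of_mem_erase hr, h]
    refine ⟨insert r₀ R', ?_, ?_, ?_, ?_, ?_⟩
    · intro a ha
      rcases Finset.mem_insert.mp ha with h | h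
      · exact h ▸ hr₀A
      · exact hsub (hR'sub h)
    · -- F injective
      intro a ha b hb hab
      simp only at hab
      by_cases har : a = r₀ <;> by_cases hbr : b = r₀
      · rw [har, hbr]
      · exfalso
        have hbe : b ∈ A.erase r₀ := Finset.mem_erase.mpr ⟨hbr, hb⟩
        rw [har, if_pos (Finset.mem_insert_self _ _), hFeq b hbe] at hab
        exact hFx' b hbe hab.symm
      · exfalso
        have hae : a ∈ A.erase r₀ := Finset.mem_erase.mpr ⟨har, ha⟩
        rw [hbr, if_pos (Finset.mem_insert_self _ _), hFeq a hae] at hab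
        exact hFx' a hae hab
      · have hae : a ∈ A.erase r₀ := Finset.mem_erase.mpr ⟨har, ha⟩
        have hbe : b ∈ A.erase r₀ := Finset.mem_erase.mpr ⟨hbr, hb⟩
        rw [hFeq a hae, hFeq b hbe] at hab
        exact hF' hae hbe hab
    · -- F avoids x
      intro r hr
      by_cases hrr : r = r₀
      · rw [hrr, if_pos (Finset.mem_insert_self _ _)]
        exact htx r₀ hr₀A
      · have hre : r ∈ A.erase r₀ := Finset.mem_erase.mpr ⟨hrr, hr⟩
        rw [hFeq r hre]
        split
        · exact htx r hr
        · intro he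
          exact hrr (hf hr hr₀A (he.trans hfr₀.symm))
    · -- T injective
      intro a ha b hb hab
      simp only at hab
      by_cases har : a = r₀ <;> by_cases hbr : b = r₀
      · rw [har, hbr]
      · exfalso
        have hbe : b ∈ A.erase r₀ := Finset.mem_erase.mpr ⟨hbr, hb⟩
        rw [har, if_pos (Finset.mem_insert_self _ _), hTeq b hbe] at hab
        split at hab
        · exact hbr (hf hb hr₀A hab.symm)
        · exact htx b hb (hab.symm.trans hfr₀)
      · exfalso
        have hae : a ∈ A.erase r₀ := Finset.mem_erase.mpr ⟨har, ha⟩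
        rw [hbr, if_pos (Finset.mem_insert_self _ _), hTeq a hae] at hab
        split at hab
        · exact har (hf ha hr₀A hab)
        · exact htx a ha (hab.trans hfr₀)
      · have hae : a ∈ A.erase r₀ := Finset.mem_erase.mpr ⟨har, ha⟩
        have hbe : b ∈ A.erase r₀ := Finset.mem_erase.mpr ⟨hbr, hb⟩
        rw [hTeq a hae, hTeq b hbe] at hab
        exact hT' hae hbe hab
    · -- values of f on R
      intro r hr
      rcases Finset.mem_insert.mp hr with h | h
      · exact Or.inl (h ▸ hfr₀)
      · rcases hfR' r h with h' | ⟨r', hr', he⟩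
        · exact Or.inr ⟨r₀, hr₀A, h'⟩
        · exact Or.inr ⟨r', hsub hr', he⟩
  · refine ⟨∅, Finset.empty_subset _, ?_, ?_, ?_, ?_⟩
    · simpa using hf
    · intro r hr
      simp only [Finset.notMem_empty, if_false]
      exact fun he => hx ⟨r, hr, he⟩
    · simpa using ht
    · intro r hr; exact absurd hr (Finset.notMem_empty r)

variable {n : ℕ} {L : Fin n → Fin n → Fin n}

open Classical in
lemma step (hL : IsLatinSquare L) {i : ℕ} {g : ℕ → ℕ → Fin (n + 1)}
    (hin : i < n) (h : SInv L i g) : ∃ g', SInv L (i + 1) g' := by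
  have h_fnelast : ∀ r, 1 ≤ r → r ≤ i → g r n ≠ Fin.last n := by
    intro r h1 h2 he
    have := h.rowinj r h1 h2 n r le_rfl (by omega) (he.trans (h.diag r h1 h2).symm)
    omega
  by_cases hm : i + 1 < n
  · -- main case: new row m = i+1 < n, with swap chains in columns (i+1) and n
    have hdef : ∀ r, 1 ≤ r → r ≤ i → g r (i + 1) = E L (r - 1) (i + 1) :=
      fun r h1 h2 => h.dflt r (i + 1) h1 h2 (by omega) hm
    obtain ⟨R, hRsub, hF, hFx, hT, hfR⟩ :=
      swap_lemma (Finset.Icc 1 i) (fun r => g r n) (fun r => g r (i + 1)) (E L i (i + 1))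
        (by
          intro a ha b hb hab
          simp only [Finset.coe_Icc, Set.mem_Icc] at ha hb
          exact h.colinj n le_rfl a b ha.1 ha.2 hb.1 hb.2 hab)
        (by
          intro a ha b hb hab
          simp only [Finset.coe_Icc, Set.mem_Icc] at ha hb
          have hab' : g a (i + 1) = g b (i + 1) := hab
          rw [hdef a ha.1 ha.2, hdef b hb.1 hb.2] at hab'
          have := E_injc hL (k := a - 1) (k' := b - 1) (by omega) (by omega) hm hab'
          omega)
        (by
          intro r hr he
          simp only [Finset.mem_Icc] at hr
          have he' : g r (i + 1) = E L i (i + 1) := he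
          rw [hdef r hr.1 hr.2] at he'
          have := E_injc hL (k := r - 1) (k' := i) (by omega) (by omega) hm he'
          omega)
    have hRmem : ∀ r ∈ R, 1 ≤ r ∧ r ≤ i := by
      intro r hr
      have := hRsub hr
      simpa using this
    classical
    set G : ℕ → ℕ → Fin (n + 1) := fun r c =>
      if r = i + 1 then
        (if c = i + 1 then Fin.last n else if c = n then E L i (i + 1) else E L i c)
      else if r ∈ R then
        (if c = i + 1 then g r n else if c = n then g r (i + 1) else g r c)
      else g r c with hG
    -- evaluation lemmas
    have hGnew_m : G (i + 1) (i + 1) = Fin.last n := by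
      rw [hG]; simp
    have hGnew_n : G (i + 1) n = E L i (i + 1) := by
      simp [hG, show ¬ (n : ℕ) = i + 1 by omega]
    have hGnew_o : ∀ c, c ≠ i + 1 → c ≠ n → G (i + 1) c = E L i c := by
      intro c hc1 hc2
      simp [hG, hc1, hc2]
    have hGR_m : ∀ r, r ∈ R → G r (i + 1) = g r n := by
      intro r hr
      have := hRmem r hr
      simp [hG, show ¬ r = i + 1 by omega, hr]
    have hGR_n : ∀ r, r ∈ R → G r n = g r (i + 1) := by
      intro r hr
      have := hRmem r hr
      simp [hG, show ¬ r = i + 1 by omega, hr, show ¬ (n : ℕ) = i + 1 by omega]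
    have hGold : ∀ r c, r ≠ i + 1 → (r ∉ R ∨ (c ≠ i + 1 ∧ c ≠ n)) → G r c = g r c := by
      intro r c hr hor
      rcases hor with hor | ⟨hc1, hc2⟩
      · simp [hG, hr, hor]
      · simp [hG, hr, hc1, hc2]
    -- packaged values of old rows in columns i+1 and n
    have hvm : ∀ r, 1 ≤ r → r ≤ i → G r (i + 1) = if r ∈ R then g r n else g r (i + 1) := by
      intro r h1 h2
      by_cases hr : r ∈ R
      · rw [hGR_m r hr, if_pos hr]
      · rw [hGold r (i + 1) (by omega) (Or.inl hr), if_neg hr]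
    have hvn : ∀ r, 1 ≤ r → r ≤ i → G r n = if r ∈ R then g r (i + 1) else g r n := by
      intro r h1 h2
      by_cases hr : r ∈ R
      · rw [hGR_n r hr, if_pos hr]
      · rw [hGold r n (by omega) (Or.inl hr), if_neg hr]
    have hvm_ne : ∀ r, 1 ≤ r → r ≤ i → G r (i + 1) ≠ Fin.last n := by
      intro r h1 h2
      rw [hvm r h1 h2]
      split
      · exact h_fnelast r h1 h2
      · rw [hdef r h1 h2]
        exact E_ne_last L (by omega) hm
    have hGoth : ∀ r c, 1 ≤ r → r ≤ i → c ≠ i + 1 → c ≠ n → G r c = g r c := by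
      intro r c h1 h2 hc1 hc2
      exact hGold r c (by omega) (Or.inr ⟨hc1, hc2⟩)
    refine ⟨G, ?_, ?_, ?_, ?_, ?_, ?_⟩
    · -- diag
      intro r h1 h2
      by_cases hr : r = i + 1
      · rw [hr]; exact hGnew_m
      · rw [hGoth r r h1 (by omega) hr (by omega)]
        exact h.diag r h1 (by omega)
    · -- fixed
      intro r c h1 h2 hc
      by_cases hr : r = i + 1
      · rw [hr, hGnew_o c (by omega) (by omega)]
        simp
      · rw [hGoth r c h1 (by omega) (by omega) (by omega)]
        exact h.fixed r c h1 (by omega) hc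
    · -- rowinj
      intro r h1 h2 c c' hc hc' he
      by_cases hr : r = i + 1
      · subst hr
        by_cases e1 : c = i + 1 <;> by_cases e2 : c' = i + 1
        · omega
        · exfalso
          rw [e1, hGnew_m] at he
          by_cases f2 : c' = n
          · rw [f2, hGnew_n] at he
            exact E_ne_last L (by omega) hm he.symm
          · rw [hGnew_o c' e2 f2] at he
            exact E_ne_last L (by omega) (by omega) he.symm
        · exfalso
          rw [e2, hGnew_m] at he
          by_cases f1 : c = n
          · rw [f1, hGnew_n] at he
            exact E_ne_last L (by omega) hm he
          · rw [hGnew_o c e1 f1] at he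
            exact E_ne_last L (by omega) (by omega) he
        · by_cases f1 : c = n <;> by_cases f2 : c' = n
          · omega
          · rw [f1, hGnew_n, hGnew_o c' e2 f2] at he
            have := E_injr hL (by omega) hm (by omega) he
            omega
          · rw [f2, hGnew_n, hGnew_o c e1 f1] at he
            have := E_injr hL (by omega) (by omega) hm he
            omega
          · rw [hGnew_o c e1 f1, hGnew_o c' e2 f2] at he
            exact E_injr hL (by omega) (by omega) (by omega) he
      · have h2' : r ≤ i := by omega
        by_cases hR : r ∈ R
        · by_cases e1 : c = i + 1 <;> by_cases e2 : c' = i + 1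
          · omega
          · rw [e1, hGR_m r hR] at he
            by_cases f2 : c' = n
            · rw [f2, hGR_n r hR] at he
              have := h.rowinj r h1 h2' n (i + 1) le_rfl (by omega) he
              omega
            · rw [hGoth r c' h1 h2' e2 f2] at he
              have := h.rowinj r h1 h2' n c' le_rfl (by omega) he
              omega
          · rw [e2, hGR_m r hR] at he
            by_cases f1 : c = n
            · rw [f1, hGR_n r hR] at he
              have := h.rowinj r h1 h2' (i + 1) n (by omega) le_rfl he
              omega
            · rw [hGoth r c h1 h2' e1 f1] at he
              have := h.rowinj r h1 h2' c n (by omega) le_rfl he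
              omega
          · by_cases f1 : c = n <;> by_cases f2 : c' = n
            · omega
            · rw [f1, hGR_n r hR, hGoth r c' h1 h2' e2 f2] at he
              have := h.rowinj r h1 h2' (i + 1) c' (by omega) (by omega) he
              omega
            · rw [f2, hGR_n r hR, hGoth r c h1 h2' e1 f1] at he
              have := h.rowinj r h1 h2' c (i + 1) (by omega) (by omega) he
              omega
            · rw [hGoth r c h1 h2' e1 f1, hGoth r c' h1 h2' e2 f2] at he
              exact h.rowinj r h1 h2' c c' hc hc' he
        · rw [hGold r c (by omega) (Or.inl hR), hGold r c' (by omega) (Or.inl hR)] at he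
          exact h.rowinj r h1 h2' c c' hc hc' he
    · -- colinj
      intro c hc r r' hr1 hr2 hr1' hr2' he
      by_cases hcm : c = i + 1
      · subst hcm
        by_cases e1 : r = i + 1 <;> by_cases e2 : r' = i + 1
        · omega
        · exfalso
          rw [e1, hGnew_m] at he
          exact hvm_ne r' hr1' (by omega) he.symm
        · exfalso
          rw [e2, hGnew_m] at he
          exact hvm_ne r hr1 (by omega) he
        · rw [hvm r hr1 (by omega), hvm r' hr1' (by omega)] at he
          exact hT (by simp only [Finset.coe_Icc, Set.mem_Icc]; omega)
            (by simp only [Finset.coe_Icc, Set.mem_Icc]; omega) he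
      · by_cases hcn : c = n
        · subst hcn
          by_cases e1 : r = i + 1 <;> by_cases e2 : r' = i + 1
          · omega
          · exfalso
            rw [e1, hGnew_n, hvn r' hr1' (by omega)] at he
            exact hFx r' (by simp only [Finset.mem_Icc]; omega) he.symm
          · exfalso
            rw [e2, hGnew_n, hvn r hr1 (by omega)] at he
            exact hFx r (by simp only [Finset.mem_Icc]; omega) he
          · rw [hvn r hr1 (by omega), hvn r' hr1' (by omega)] at he
            exact hF (by simp only [Finset.coe_Icc, Set.mem_Icc]; omega)
              (by simp only [Finset.coe_Icc, Set.mem_Icc]; omega) he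
        · have hcn' : c < n := by omega
          by_cases e1 : r = i + 1 <;> by_cases e2 : r' = i + 1
          · omega
          · exfalso
            rw [e1, hGnew_o c hcm hcn, hGoth r' c hr1' (by omega) hcm hcn] at he
            by_cases hcr : c = r'
            · have : g r' c = Fin.last n := by rw [hcr]; exact h.diag r' hr1' (by omega)
              rw [this] at he
              exact E_ne_last L (by omega) hcn' he
            · obtain ⟨k, hk, hke⟩ := h.form r' c hr1' (by omega) hcn' hcr
              rw [hke] at he
              have := E_injc hL (by omega) (by omega) hcn' he
              omega
          · exfalso
            rw [e2, hGnew_o c hcm hcn, hGoth r c hr1 (by omega) hcm hcn] at he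
            by_cases hcr : c = r
            · have : g r c = Fin.last n := by rw [hcr]; exact h.diag r hr1 (by omega)
              rw [this] at he
              exact E_ne_last L (by omega) hcn' he.symm
            · obtain ⟨k, hk, hke⟩ := h.form r c hr1 (by omega) hcn' hcr
              rw [hke] at he
              have := E_injc hL (by omega) (by omega) hcn' he.symm
              omega
          · rw [hGoth r c hr1 (by omega) hcm hcn, hGoth r' c hr1' (by omega) hcm hcn] at he
            exact h.colinj c hc r r' hr1 (by omega) hr1' (by omega) he
    · -- form
      intro r c h1 h2 hcn hcr
      by_cases hr : r = i + 1
      · rw [hr, hGnew_o c (by omega) (by omega)]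
        exact ⟨i, by omega, rfl⟩
      · have h2' : r ≤ i := by omega
        by_cases hcm : c = i + 1
        · subst hcm
          rw [hvm r h1 h2']
          by_cases hR : r ∈ R
          · rw [if_pos hR]
            rcases hfR r hR with hh | ⟨r', hr', hh⟩
            · exact ⟨i, by omega, hh⟩
            · simp only [Finset.mem_Icc] at hr'
              have hh' : g r n = g r' (i + 1) := hh
              rw [hh', hdef r' hr'.1 hr'.2]
              exact ⟨r' - 1, by omega, rfl⟩
          · rw [if_neg hR, hdef r h1 h2']
            exact ⟨r - 1, by omega, rfl⟩
        · rw [hGoth r c h1 h2' hcm (by omega)]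
          obtain ⟨k, hk, hke⟩ := h.form r c h1 h2' hcn hcr
          exact ⟨k, by omega, hke⟩
    · -- dflt
      intro r c h1 h2 hci hcn
      have hcm : c ≠ i + 1 := by omega
      by_cases hr : r = i + 1
      · rw [hr, hGnew_o c hcm (by omega)]
        simp
      · rw [hGoth r c h1 (by omega) hcm (by omega)]
        exact h.dflt r c h1 (by omega) (by omega) hcn
  · -- last row: m = i + 1 = n
    have hmn : i + 1 = n := by omega
    set G : ℕ → ℕ → Fin (n + 1) := fun r c =>
      if r = n then (if c = n then Fin.last n else E L (n - 1) c) else g r c with hG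
    have hGn_n : G n n = Fin.last n := by rw [hG]; simp
    have hGn_o : ∀ c, c ≠ n → G n c = E L (n - 1) c := by
      intro c hcn
      simp [hG, hcn]
    have hGold : ∀ r c, r ≠ n → G r c = g r c := by
      intro r c hr
      simp [hG, hr]
    refine ⟨G, ?_, ?_, ?_, ?_, ?_, ?_⟩
    · intro r h1 h2
      by_cases hr : r = n
      · rw [hr]; exact hGn_n
      · rw [hGold r r hr]
        exact h.diag r h1 (by omega)
    · intro r c h1 h2 hc
      by_cases hr : r = n
      · rw [hr, hGn_o c (by omega)]
      · rw [hGold r c hr]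
        exact h.fixed r c h1 (by omega) hc
    · intro r h1 h2 c c' hc hc' he
      by_cases hr : r = n
      · rw [hr] at he
        by_cases f1 : c = n <;> by_cases f2 : c' = n
        · omega
        · exfalso
          rw [f1, hGn_n, hGn_o c' f2] at he
          exact E_ne_last L (by omega) (by omega) he.symm
        · exfalso
          rw [f2, hGn_n, hGn_o c f1] at he
          exact E_ne_last L (by omega) (by omega) he
        · rw [hGn_o c f1, hGn_o c' f2] at he
          exact E_injr hL (by omega) (by omega) (by omega) he
      · rw [hGold r c hr, hGold r c' hr] at he
        exact h.rowinj r h1 (by omega) c c' hc hc' he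
    · intro c hc r r' hr1 hr2 hr1' hr2' he
      by_cases e1 : r = n <;> by_cases e2 : r' = n
      · omega
      · exfalso
        rw [e1, hGold r' c e2] at he
        by_cases f : c = n
        · rw [f, hGn_n] at he
          exact h_fnelast r' hr1' (by omega) (f ▸ he.symm)
        · rw [hGn_o c f] at he
          by_cases hcr : c = r'
          · have : g r' c = Fin.last n := by rw [hcr]; exact h.diag r' hr1' (by omega)
            rw [this] at he
            exact E_ne_last L (by omega) (by omega) he
          · obtain ⟨k, hk, hke⟩ := h.form r' c hr1' (by omega) (by omega) hcr
            rw [hke] at he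
            have := E_injc hL (by omega) (by omega) (by omega) he
            omega
      · exfalso
        rw [e2, hGold r c e1] at he
        by_cases f : c = n
        · rw [f, hGn_n] at he
          exact h_fnelast r hr1 (by omega) (f ▸ he)
        · rw [hGn_o c f] at he
          by_cases hcr : c = r
          · have : g r c = Fin.last n := by rw [hcr]; exact h.diag r hr1 (by omega)
            rw [this] at he
            exact E_ne_last L (by omega) (by omega) he.symm
          · obtain ⟨k, hk, hke⟩ := h.form r c hr1 (by omega) (by omega) hcr
            rw [hke] at he
            have := E_injc hL (by omega) (by omega) (by omega) he.symm
            omega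
      · rw [hGold r c e1, hGold r' c e2] at he
        exact h.colinj c hc r r' hr1 (by omega) hr1' (by omega) he
    · intro r c h1 h2 hcn hcr
      by_cases hr : r = n
      · rw [hr, hGn_o c (by omega)]
        exact ⟨n - 1, by omega, rfl⟩
      · rw [hGold r c hr]
        obtain ⟨k, hk, hke⟩ := h.form r c h1 (by omega) hcn hcr
        exact ⟨k, by omega, hke⟩
    · intro r c h1 h2 hci hcn
      omega

end Smet

namespace Smet

variable {n : ℕ} {L : Fin n → Fin n → Fin n}

lemma exists_sinv (hL : IsLatinSquare L) : ∃ g, SInv L n g := by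
  suffices h : ∀ i, i ≤ n → ∃ g, SInv L i g from h n le_rfl
  intro i
  induction i with
  | zero =>
    intro _
    exact ⟨fun _ _ => Fin.last n, by
      constructor <;> (intro r; intros; omega)⟩
  | succ i ih =>
    intro hi
    obtain ⟨g, hg⟩ := ih (by omega)
    exact step hL (by omega) hg

end Smet
/-- (Smetaniuk) If `P` is a completable partial Latin square of order `n`, then the
order-`n+1` partial Latin square `T(P)` — obtained by shifting the part of `P` strictly
below the forward diagonal down one row, filling the forward diagonal with the new
symbol `n+1`, and leaving every other cell empty — is completable. -/
theorem stmt_6 (n : ℕ) (P : Fin n → Fin n → Option (Fin n))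
    (hP : IsPartialLatinSquare P)
    (Q : Fin (n + 1) → Fin (n + 1) → Option (Fin (n + 1)))
    (hQ : ∀ i j : Fin (n + 1),
      Q i j =
        if i = j then some (Fin.last n)
        else if h : j.val + 1 < i.val then
          Option.map (Fin.castLE (by omega))
            (P ⟨i.val - 1, by have := i.isLt; omega⟩ ⟨j.val, by have := i.isLt; omega⟩)
        else none)
    (hcomp : Completable P) :
    Completable Q := by
  classical
  obtain ⟨L, hL, hLP⟩ := hcomp
  obtain ⟨g, hg⟩ := Smet.exists_sinv hL
  -- every column (among placed rows 1..n) misses some symbol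
  have hex : ∀ c : ℕ, ∃ x : Fin (n + 1), ∀ r, 1 ≤ r → r ≤ n → g r c ≠ x := by
    intro c
    have hcard : ((Finset.Icc 1 n).image (fun r => g r c)).card ≤ n :=
      Finset.card_image_le.trans (by simp)
    have hne : ∃ x : Fin (n + 1), x ∉ (Finset.Icc 1 n).image (fun r => g r c) := by
      by_contra hall
      push_neg at hall
      have hsub : (Finset.univ : Finset (Fin (n + 1))) ⊆
          (Finset.Icc 1 n).image (fun r => g r c) := fun x _ => hall x
      have hle := Finset.card_le_card hsub
      rw [Finset.card_univ, Fintype.card_fin] at hle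
      omega
    obtain ⟨x, hx⟩ := hne
    exact ⟨x, fun r h1 h2 he => hx (Finset.mem_image.mpr ⟨r, Finset.mem_Icc.mpr ⟨h1, h2⟩, he⟩)⟩
  set miss : ℕ → Fin (n + 1) := fun c => Classical.choose (hex c) with hmissdef
  have hmiss : ∀ c : ℕ, ∀ r, 1 ≤ r → r ≤ n → g r c ≠ miss c :=
    fun c => Classical.choose_spec (hex c)
  -- the missing symbol is unique
  have huniq : ∀ c : ℕ, c ≤ n → ∀ x y : Fin (n + 1),
      (∀ r, 1 ≤ r → r ≤ n → g r c ≠ x) → (∀ r, 1 ≤ r → r ≤ n → g r c ≠ y) → x = y := by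
    intro c hc x y hx hy
    by_contra hxy
    have hinj : Set.InjOn (fun r => g r c) ↑(Finset.Icc 1 n) := by
      intro a ha b hb hab
      simp only [Finset.coe_Icc, Set.mem_Icc] at ha hb
      exact hg.colinj c hc a b ha.1 ha.2 hb.1 hb.2 hab
    have hcard : ((Finset.Icc 1 n).image (fun r => g r c)).card = n := by
      rw [Finset.card_image_of_injOn hinj]
      simp
    have hxs : x ∉ (Finset.Icc 1 n).image (fun r => g r c) := by
      intro hmem
      obtain ⟨r, hr, he⟩ := Finset.mem_image.mp hmem
      simp only [Finset.mem_Icc] at hr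
      exact hx r hr.1 hr.2 he
    have hys : y ∉ insert x ((Finset.Icc 1 n).image (fun r => g r c)) := by
      intro hmem
      rcases Finset.mem_insert.mp hmem with he | hmem'
      · exact hxy he.symm
      · obtain ⟨r, hr, he⟩ := Finset.mem_image.mp hmem'
        simp only [Finset.mem_Icc] at hr
        exact hy r hr.1 hr.2 he
    have hbig : (insert y (insert x ((Finset.Icc 1 n).image (fun r => g r c)))).card = n + 2 := by
      rw [Finset.card_insert_of_notMem hys, Finset.card_insert_of_notMem hxs, hcard]
    have hle := Finset.card_le_card
      (Finset.subset_univ (insert y (insert x ((Finset.Icc 1 n).image (fun r => g r c)))))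
    rw [hbig, Finset.card_univ, Fintype.card_fin] at hle
    omega
  -- row 0 (the missing symbols) is injective across columns
  have hmissinj : ∀ c c' : ℕ, c ≤ n → c' ≤ n → miss c = miss c' → c = c' := by
    intro c c' hc hc' he
    by_contra hne
    have hn1 : 1 ≤ n := by omega
    have hsur : ∀ r, 1 ≤ r → r ≤ n → ∃ j : Fin (n + 1), g r j.val = miss c := by
      intro r h1 h2
      have hinj : Function.Injective (fun j : Fin (n + 1) => g r j.val) := by
        intro a b hab
        exact Fin.ext (hg.rowinj r h1 h2 a.val b.val (by omega) (by omega) hab)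
      exact (Finite.injective_iff_surjective.mp hinj) (miss c)
    set κ : ℕ → Fin (n + 1) := fun r =>
      if h : 1 ≤ r ∧ r ≤ n then Classical.choose (hsur r h.1 h.2) else 0 with hκdef
    have hκ : ∀ r, 1 ≤ r → r ≤ n → g r (κ r).val = miss c := by
      intro r h1 h2
      have : κ r = Classical.choose (hsur r h1 h2) := by
        rw [hκdef]
        simp only [dif_pos (⟨h1, h2⟩ : 1 ≤ r ∧ r ≤ n)]
      rw [this]
      exact Classical.choose_spec (hsur r h1 h2)
    have hκinj : Set.InjOn κ ↑(Finset.Icc 1 n) := by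
      intro a ha b hb hab
      simp only [Finset.coe_Icc, Set.mem_Icc] at ha hb
      have h1' : g a (κ a).val = miss c := hκ a ha.1 ha.2
      have h2' : g b (κ a).val = miss c := by
        rw [hab]
        exact hκ b hb.1 hb.2
      exact hg.colinj (κ a).val (by omega) a b ha.1 ha.2 hb.1 hb.2 (h1'.trans h2'.symm)
    have hKcard : ((Finset.Icc 1 n).image κ).card = n := by
      rw [Finset.card_image_of_injOn hκinj]
      simp
    have hcne : (⟨c, by omega⟩ : Fin (n + 1)) ≠ ⟨c', by omega⟩ := by
      intro hcc
      exact hne (congrArg Fin.val hcc)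
    have hKsub : (Finset.Icc 1 n).image κ ⊆
        (Finset.univ.erase (⟨c, by omega⟩ : Fin (n + 1))).erase ⟨c', by omega⟩ := by
      intro j hj
      obtain ⟨r, hr, hje⟩ := Finset.mem_image.mp hj
      simp only [Finset.mem_Icc] at hr
      rw [Finset.mem_erase, Finset.mem_erase]
      refine ⟨?_, ?_, Finset.mem_univ _⟩
      · intro hh
        have : g r c' = miss c' := by
          have := hκ r hr.1 hr.2
          rw [hje, hh] at this
          exact this.trans he
        exact hmiss c' r hr.1 hr.2 this
      · intro hh
        have : g r c = miss c := by
          have := hκ r hr.1 hr.2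
          rw [hje, hh] at this
          exact this
        exact hmiss c r hr.1 hr.2 this
    have hle := Finset.card_le_card hKsub
    have hmem2 : (⟨c', by omega⟩ : Fin (n + 1)) ∈ Finset.univ.erase (⟨c, by omega⟩ : Fin (n + 1)) := by
      rw [Finset.mem_erase]
      exact ⟨hcne.symm, Finset.mem_univ _⟩
    have h2 : ((Finset.univ.erase (⟨c, by omega⟩ : Fin (n + 1))).erase ⟨c', by omega⟩).card = n - 1 := by
      rw [Finset.card_erase_of_mem hmem2, Finset.card_erase_of_mem (Finset.mem_univ _),
        Finset.card_univ, Fintype.card_fin]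
      omega
    have hle2 : n ≤ n - 1 := by
      calc n = (Finset.image κ (Finset.Icc 1 n)).card := hKcard.symm
        _ ≤ _ := hle
        _ = n - 1 := h2
    omega
  have hmiss0 : miss 0 = Fin.last n := by
    apply huniq 0 (by omega) (miss 0) (Fin.last n) (hmiss 0)
    intro r h1 h2 he
    have := hg.rowinj r h1 h2 0 r (by omega) (by omega) (he.trans (hg.diag r h1 h2).symm)
    omega
  -- the completed Latin square
  refine ⟨fun r c => if r.val = 0 then miss c.val else g r.val c.val, ⟨?_, ?_⟩, ?_⟩
  · -- rows injective
    intro r a b hab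
    have hab' : (if r.val = 0 then miss a.val else g r.val a.val) =
        (if r.val = 0 then miss b.val else g r.val b.val) := hab
    clear hab
    rename' hab' => hab
    by_cases hr : r.val = 0
    · rw [if_pos hr, if_pos hr] at hab
      exact Fin.ext (hmissinj a.val b.val (by omega) (by omega) hab)
    · rw [if_neg hr, if_neg hr] at hab
      exact Fin.ext (hg.rowinj r.val (by omega) (by omega) a.val b.val (by omega) (by omega) hab)
  · -- columns injective
    intro c a b hab
    have hab' : (if a.val = 0 then miss c.val else g a.val c.val) =
        (if b.val = 0 then miss c.val else g b.val c.val) := hab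
    clear hab
    rename' hab' => hab
    by_cases ha : a.val = 0 <;> by_cases hb : b.val = 0
    · exact Fin.ext (by omega)
    · exfalso
      rw [if_pos ha, if_neg hb] at hab
      exact hmiss c.val b.val (by omega) (by omega) hab.symm
    · exfalso
      rw [if_neg ha, if_pos hb] at hab
      exact hmiss c.val a.val (by omega) (by omega) hab
    · rw [if_neg ha, if_neg hb] at hab
      exact Fin.ext (hg.colinj c.val (by omega) a.val b.val (by omega) (by omega)
        (by omega) (by omega) hab)
  · -- agrees with Q
    intro i j s hij
    rw [hQ i j] at hij
    by_cases hd : i = j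
    · rw [if_pos hd] at hij
      have hs : s = Fin.last n := (Option.some.inj hij).symm
      subst hd
      show (if i.val = 0 then miss i.val else g i.val i.val) = s
      by_cases h0 : i.val = 0
      · rw [if_pos h0, hs]
        rw [h0, hmiss0]
      · rw [if_neg h0, hs]
        exact hg.diag i.val (by omega) (by omega)
    · rw [if_neg hd] at hij
      by_cases hlt : j.val + 1 < i.val
      · rw [dif_pos hlt] at hij
        obtain ⟨s₀, hs₀, hcast⟩ := Option.map_eq_some_iff.mp hij
        have h0 : ¬ i.val = 0 := by omega
        show (if i.val = 0 then miss j.val else g i.val j.val) = s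
        rw [if_neg h0]
        have hiv : i.val ≤ n := by omega
        have hfix : g i.val j.val = Smet.E L (i.val - 1) j.val :=
          hg.fixed i.val j.val (by omega) hiv (by omega)
        rw [hfix, Smet.E,
          dif_pos (⟨by omega, by omega⟩ : i.val - 1 < n ∧ j.val < n)]
        rw [← hcast]
        congr 1
        exact hLP _ _ s₀ hs₀
      · rw [dif_neg hlt] at hij
        exact absurd hij (by simp)
end

section
/- Let n ≥ 8, let P ∈ PLS(2,3;n), let S = {P(1,1), P(1,2), P(1,3)}, and let σ be the (1,2)-row-permutation of P. If P is not completely reduced, then the disjoint cycle decomposition of σ contains a cycle of length at least 3 that contains two consecutive elements neither of which belongs to S; that is, there is a symbol s lying in a cycle of σ of length at least 3 with s ∉ S and σ(s) ∉ S. -/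
/-- The cycle type of the cycle of `σ` through `s`, relative to the symbol set `S`:
the binary sequence recording, along the cycle starting at `s`, membership in `S`. -/
noncomputable def cycleTypeSeq {n : ℕ} (σ : Equiv.Perm (Fin n)) (S : Finset (Fin n)) (s : Fin n) :
    List Bool :=
  (List.range (Function.minimalPeriod (⇑σ) s)).map fun m => decide ((σ ^ m) s ∈ S)

/-- The allowed cycle types `00, 01, 11, 101, 111, 1010, 1110, 10101, 101010`. -/
def allowedTypes : List (List Bool) :=
  [[false, false], [false, true], [true, true],
   [true, false, true], [true, true, true],
   [true, false, true, false], [true, true, true, false],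
   [true, false, true, false, true],
   [true, false, true, false, true, false]]

/-- `σ` is completely reduced (relative to `S`) if the cycle type of every cycle of `σ`
is equivalent, up to cyclic rotation, to one of the allowed sequences. -/
def CompletelyReduced {n : ℕ} (σ : Equiv.Perm (Fin n)) (S : Finset (Fin n)) : Prop :=
  ∀ s : Fin n, ∃ m : ℕ, cycleTypeSeq σ S ((σ ^ m) s) ∈ allowedTypes

/-! Rows 1 and 2 of a partial Latin square differ in every column, so `σ` has no fixed points
and every cycle has length at least 2; every binary word of length 2 is an allowed type.
If no cycle of length at least 3 contains two consecutive symbols outside `S`, the type of such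
a cycle has no two cyclically adjacent `0`s, so it has at most as many `0`s as `1`s. The symbols
of a cycle are distinct, so it has at most `|S| ≤ 3` ones, hence length at most 6, and the
finitely many remaining words are checked to be rotations of allowed types. -/

open Function

theorem IsPartialLatinSquare.exists_eq_some_of_forall_ne_none {n : ℕ}
    {P : Fin n → Fin n → Option (Fin n)} (hP : IsPartialLatinSquare P) {r : Fin n}
    (hr : ∀ j, P r j ≠ none) (x : Fin n) : ∃ j, P r j = some x := by
  choose f hf using fun j => Option.ne_none_iff_exists'.mp (hr j)
  have hf_inj : Injective f := fun j j' h =>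
    hP.1 r j j' (f j) (hf j) (by rw [h]; exact hf j')
  obtain ⟨j, rfl⟩ := Finite.surjective_of_injective hf_inj x
  exact ⟨j, hf j⟩

theorem IsPartialLatinSquare.rowPerm_apply_ne_self {n : ℕ}
    {P : Fin n → Fin n → Option (Fin n)} (hP : IsPartialLatinSquare P) {r₀ r₁ : Fin n}
    (hr : r₀ ≠ r₁) (h₀ : ∀ j, P r₀ j ≠ none) (h₁ : ∀ j, P r₁ j ≠ none)
    {σ : Equiv.Perm (Fin n)} (hσ : ∀ i x y, P r₀ i = some x → P r₁ i = some y → σ x = y)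
    (x : Fin n) : σ x ≠ x := by
  intro hx
  obtain ⟨j, hj₀⟩ := hP.exists_eq_some_of_forall_ne_none h₀ x
  obtain ⟨y, hj₁⟩ := Option.ne_none_iff_exists'.mp (h₁ j)
  obtain rfl : y = x := (hσ j x y hj₀ hj₁).symm.trans hx
  exact hr (hP.2 r₀ r₁ j y hj₀ hj₁)

/-- `w.zip (w.rotate 1)` lists the pairs of cyclically adjacent letters of `w`. -/
abbrev NoCyclicZeroPair (w : List Bool) : Prop :=
  ∀ p ∈ w.zip (w.rotate 1), p.1 || p.2

theorem NoCyclicZeroPair.count_false_le_count_true {w : List Bool} (h : NoCyclicZeroPair w) :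
    w.count false ≤ w.count true := by
  have hlen : w.length = (w.rotate 1).length := (List.length_rotate w 1).symm
  calc w.count false
      = (w.zip (w.rotate 1)).countP (fun p => p.1 == false) := by
        conv_lhs => rw [← List.map_fst_zip hlen.le]
        rw [List.count_eq_countP, List.countP_map]
        rfl
    _ ≤ (w.zip (w.rotate 1)).countP (fun p => p.2 == true) :=
        List.countP_mono_left fun ⟨b₁, b₂⟩ hp hb₁ => by
          have := h _ hp
          cases b₁ <;> cases b₂ <;> simp_all
    _ = (w.rotate 1).count true := by
        conv_rhs => rw [← List.map_snd_zip hlen.ge]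
        rw [List.count_eq_countP, List.countP_map]
        rfl
    _ = w.count true := (List.rotate_perm w 1).count_eq true

-- The `Decidable` instance of this statement exceeds the default instance size.
set_option synthInstance.maxSize 1024 in
theorem exists_rotate_ofFn_mem_allowedTypes : ∀ k < 7, ∀ v : Fin k → Bool, 3 ≤ k →
    (List.ofFn v).count true ≤ 3 → NoCyclicZeroPair (List.ofFn v) →
    ∃ m < k, (List.ofFn v).rotate m ∈ allowedTypes := by
  decide

theorem exists_rotate_mem_allowedTypes {w : List Bool} (h2 : 2 ≤ w.length)
    (htrue : w.count true ≤ 3) (hadj : 3 ≤ w.length → NoCyclicZeroPair w) :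
    ∃ m, w.rotate m ∈ allowedTypes := by
  rcases h2.eq_or_lt with h2 | h3
  · obtain ⟨x, y, rfl⟩ := List.length_eq_two.1 h2.symm
    cases x <;> cases y <;> first | exact ⟨0, by decide⟩ | exact ⟨1, by decide⟩
  · have hfalse := (hadj h3).count_false_le_count_true
    have hlen := List.count_true_add_count_false w
    have hw : List.ofFn (fun i : Fin w.length => w[i]) = w := List.ofFn_getElem
    obtain ⟨m, -, hm⟩ := exists_rotate_ofFn_mem_allowedTypes w.length (by omega) _ h3
      (by rwa [hw]) (by rw [hw]; exact hadj h3)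
    exact ⟨m, by rwa [hw] at hm⟩

section CycleType

variable {n : ℕ} (σ : Equiv.Perm (Fin n)) (S : Finset (Fin n)) (x : Fin n)

theorem length_cycleTypeSeq : (cycleTypeSeq σ S x).length = minimalPeriod σ x := by
  simp [cycleTypeSeq]

theorem getElem_cycleTypeSeq (k : ℕ) (hk : k < (cycleTypeSeq σ S x).length) :
    (cycleTypeSeq σ S x)[k] = decide (σ^[k] x ∈ S) := by
  simp [cycleTypeSeq, Equiv.Perm.coe_pow]

theorem cycleTypeSeq_pow_apply (m : ℕ) :
    cycleTypeSeq σ S ((σ ^ m) x) = (cycleTypeSeq σ S x).rotate m := by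
  have hx : x ∈ periodicPts σ := σ.injective.mem_periodicPts x
  apply List.ext_getElem
  · simp only [List.length_rotate, length_cycleTypeSeq, Equiv.Perm.coe_pow,
      minimalPeriod_apply_iterate hx]
  · intro k _ _
    simp only [getElem_cycleTypeSeq, List.getElem_rotate, length_cycleTypeSeq,
      Equiv.Perm.coe_pow, ← iterate_add_apply, iterate_mod_minimalPeriod_eq]

theorem count_true_cycleTypeSeq_le : (cycleTypeSeq σ S x).count true ≤ S.card := by
  have hcount : (cycleTypeSeq σ S x).count true =
      ((Finset.range (minimalPeriod σ x)).filter fun k => σ^[k] x ∈ S).card := by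
    rw [cycleTypeSeq, List.count_eq_countP, List.countP_map]
    simp only [Equiv.Perm.coe_pow, Function.comp_def, beq_true]
    rw [List.countP_eq_length_filter]
    rfl
  rw [hcount]
  refine Finset.card_le_card_of_injOn (σ^[·] x) (fun k hk => (Finset.mem_filter.1 hk).2) ?_
  intro k hk l hl
  exact iterate_injOn_Iio_minimalPeriod (by simpa using (Finset.mem_filter.1 hk).1)
    (by simpa using (Finset.mem_filter.1 hl).1)

theorem noCyclicZeroPair_cycleTypeSeq (h : ∀ k, σ^[k] x ∉ S → σ (σ^[k] x) ∈ S) :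
    NoCyclicZeroPair (cycleTypeSeq σ S x) := by
  intro p hp
  rw [← cycleTypeSeq_pow_apply σ S x 1, List.mem_iff_getElem] at hp
  obtain ⟨k, -, rfl⟩ := hp
  simp only [List.getElem_zip, getElem_cycleTypeSeq, pow_one, ← iterate_succ_apply,
    iterate_succ_apply']
  by_cases hk : σ^[k] x ∈ S <;> simp [hk, h]

end CycleType

theorem completelyReduced_of_apply_mem_of_notMem {n : ℕ} {σ : Equiv.Perm (Fin n)}
    {S : Finset (Fin n)} (hS : S.card ≤ 3) (hσ : ∀ x, σ x ≠ x)
    (h : ∀ y, 3 ≤ minimalPeriod σ y → y ∉ S → σ y ∈ S) : CompletelyReduced σ S := by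
  intro x
  have hx : x ∈ periodicPts σ := σ.injective.mem_periodicPts x
  have h2 : 2 ≤ (cycleTypeSeq σ S x).length := by
    have hpos := minimalPeriod_pos_of_mem_periodicPts hx
    have hne : minimalPeriod σ x ≠ 1 := fun h1 => hσ x (minimalPeriod_eq_one_iff_isFixedPt.1 h1)
    rw [length_cycleTypeSeq]
    omega
  obtain ⟨m, hm⟩ := exists_rotate_mem_allowedTypes h2
    ((count_true_cycleTypeSeq_le σ S x).trans hS) fun h3 =>
      noCyclicZeroPair_cycleTypeSeq σ S x fun k =>
        h _ (by rwa [minimalPeriod_apply_iterate hx, ← length_cycleTypeSeq σ S])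
  exact ⟨m, by rwa [cycleTypeSeq_pow_apply]⟩

/-- If `P ∈ PLS(2,3;n)`, `n ≥ 8`, is not completely reduced, then some cycle of its
`(1,2)`-row-permutation `σ` of length at least `3` contains two consecutive elements
neither of which belongs to `S = {P(1,1), P(1,2), P(1,3)}`. -/
theorem stmt_8 (n : ℕ) (hn : 8 ≤ n)
    (P : Fin n → Fin n → Option (Fin n))
    (hP : IsPartialLatinSquare P)
    (hfill : ∀ i j : Fin n, P i j ≠ none ↔ (i.val < 2 ∨ j.val < 3))
    (a b c : Fin n)
    (σ : Equiv.Perm (Fin n))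
    (hσ : ∀ i x y : Fin n,
      P ⟨0, by omega⟩ i = some x → P ⟨1, by omega⟩ i = some y → σ x = y)
    (hnred : ¬ CompletelyReduced σ ({a, b, c} : Finset (Fin n))) :
    ∃ s : Fin n, 3 ≤ Function.minimalPeriod (⇑σ) s ∧
      s ∉ ({a, b, c} : Finset (Fin n)) ∧ σ s ∉ ({a, b, c} : Finset (Fin n)) := by
  by_contra hcon
  push Not at hcon
  have hrow (r : Fin n) (hr : r.val < 2) (j : Fin n) : P r j ≠ none := (hfill r j).2 (Or.inl hr)
  have hfix := hP.rowPerm_apply_ne_self (by simp [Fin.ext_iff]) (hrow _ Nat.two_pos)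
    (hrow _ one_lt_two) hσ
  exact hnred (completelyReduced_of_apply_mem_of_notMem Finset.card_le_three hfix hcon)
end

section
/- For each n ∈ {5, 6, 7} there exists an n×n partial Latin square in which the first two rows and the first three columns are completely filled and every other cell is empty, and which is not completable. -/
def P5 : Fin 5 → Fin 5 → Option (Fin 5) :=
  ![![some 0, some 1, some 4, some 3, some 2],
    ![some 1, some 2, some 3, some 4, some 0],
    ![some 2, some 0, some 1, none, none],
    ![some 3, some 4, some 0, none, none],
    ![some 4, some 3, some 2, none, none]]

def P6 : Fin 6 → Fin 6 → Option (Fin 6) :=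
  ![![some 0, some 1, some 5, some 4, some 2, some 3],
    ![some 3, some 4, some 2, some 5, some 0, some 1],
    ![some 1, some 2, some 0, none, none, none],
    ![some 2, some 0, some 1, none, none, none],
    ![some 4, some 5, some 3, none, none, none],
    ![some 5, some 3, some 4, none, none, none]]

def P7 : Fin 7 → Fin 7 → Option (Fin 7) :=
  ![![some 3, some 4, some 6, some 5, some 0, some 1, some 2],
    ![some 4, some 3, some 5, some 6, some 1, some 2, some 0],
    ![some 0, some 1, some 2, none, none, none, none],
    ![some 1, some 2, some 0, none, none, none, none],
    ![some 2, some 0, some 1, none, none, none, none],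
    ![some 5, some 6, some 3, none, none, none, none],
    ![some 6, some 5, some 4, none, none, none, none]]

/-- For each `n ∈ {5, 6, 7}` there is a non-completable `n × n` partial Latin square
whose first two rows and first three columns are completely filled and all of whose
other cells are empty. -/
theorem stmt_9 : ∀ n ∈ ({5, 6, 7} : Set ℕ),
    ∃ P : Fin n → Fin n → Option (Fin n),
      IsPartialLatinSquare P ∧
      (∀ i j : Fin n, P i j ≠ none ↔ (i.val < 2 ∨ j.val < 3)) ∧
      ¬ Completable P := by
  rintro n (rfl | rfl | rfl)
  · -- n = 5
    refine ⟨P5, ⟨by decide, by decide⟩, by decide, ?_⟩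
    rintro ⟨L, ⟨hr, hc⟩, hP⟩
    have e1 : L 2 0 = 2 := hP 2 0 2 (by decide)
    have e2 : L 2 1 = 0 := hP 2 1 0 (by decide)
    have e3 : L 2 2 = 1 := hP 2 2 1 (by decide)
    have e4 : L 0 3 = 3 := hP 0 3 3 (by decide)
    have e5 : L 1 3 = 4 := hP 1 3 4 (by decide)
    have n1 : L 2 3 ≠ 2 := fun h => absurd (hr 2 (h.trans e1.symm)) (by decide)
    have n2 : L 2 3 ≠ 0 := fun h => absurd (hr 2 (h.trans e2.symm)) (by decide)
    have n3 : L 2 3 ≠ 1 := fun h => absurd (hr 2 (h.trans e3.symm)) (by decide)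
    have n4 : L 2 3 ≠ 3 := fun h => absurd (hc 3 (h.trans e4.symm)) (by decide)
    have n5 : L 2 3 ≠ 4 := fun h => absurd (hc 3 (h.trans e5.symm)) (by decide)
    have key : ∀ x : Fin 5, x ≠ 2 → x ≠ 0 → x ≠ 1 → x ≠ 3 → x ≠ 4 → False := by decide
    exact key _ n1 n2 n3 n4 n5
  · -- n = 6
    refine ⟨P6, ⟨by decide, by decide⟩, by decide, ?_⟩
    rintro ⟨L, ⟨hr, hc⟩, hP⟩
    have t0 : L 0 3 = 4 := hP 0 3 4 (by decide)
    have t1 : L 1 3 = 5 := hP 1 3 5 (by decide)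
    have key : ∀ x : Fin 6, x ≠ 0 → x ≠ 1 → x ≠ 2 → x ≠ 4 → x ≠ 5 → x = 3 := by decide
    have h2 : L 2 3 = 3 := by
      refine key _ ?_ ?_ ?_ ?_ ?_
      · exact fun h => absurd (hr 2 (h.trans (hP 2 2 0 (by decide)).symm)) (by decide)
      · exact fun h => absurd (hr 2 (h.trans (hP 2 0 1 (by decide)).symm)) (by decide)
      · exact fun h => absurd (hr 2 (h.trans (hP 2 1 2 (by decide)).symm)) (by decide)
      · exact fun h => absurd (hc 3 (h.trans t0.symm)) (by decide)
      · exact fun h => absurd (hc 3 (h.trans t1.symm)) (by decide)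
    have h3 : L 3 3 = 3 := by
      refine key _ ?_ ?_ ?_ ?_ ?_
      · exact fun h => absurd (hr 3 (h.trans (hP 3 1 0 (by decide)).symm)) (by decide)
      · exact fun h => absurd (hr 3 (h.trans (hP 3 2 1 (by decide)).symm)) (by decide)
      · exact fun h => absurd (hr 3 (h.trans (hP 3 0 2 (by decide)).symm)) (by decide)
      · exact fun h => absurd (hc 3 (h.trans t0.symm)) (by decide)
      · exact fun h => absurd (hc 3 (h.trans t1.symm)) (by decide)
    have : (2 : Fin 6) = 3 := hc 3 (h2.trans h3.symm)
    exact absurd this (by decide)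
  · -- n = 7
    refine ⟨P7, ⟨by decide, by decide⟩, by decide, ?_⟩
    rintro ⟨L, ⟨hr, hc⟩, hP⟩
    have t0 : L 0 3 = 5 := hP 0 3 5 (by decide)
    have t1 : L 1 3 = 6 := hP 1 3 6 (by decide)
    have key : ∀ x : Fin 7, x ≠ 0 → x ≠ 1 → x ≠ 2 → x ≠ 5 → x ≠ 6 → (x = 3 ∨ x = 4) := by
      decide
    have h2 : L 2 3 = 3 ∨ L 2 3 = 4 := by
      refine key _ ?_ ?_ ?_ ?_ ?_
      · exact fun h => absurd (hr 2 (h.trans (hP 2 0 0 (by decide)).symm)) (by decide)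
      · exact fun h => absurd (hr 2 (h.trans (hP 2 1 1 (by decide)).symm)) (by decide)
      · exact fun h => absurd (hr 2 (h.trans (hP 2 2 2 (by decide)).symm)) (by decide)
      · exact fun h => absurd (hc 3 (h.trans t0.symm)) (by decide)
      · exact fun h => absurd (hc 3 (h.trans t1.symm)) (by decide)
    have h3 : L 3 3 = 3 ∨ L 3 3 = 4 := by
      refine key _ ?_ ?_ ?_ ?_ ?_
      · exact fun h => absurd (hr 3 (h.trans (hP 3 2 0 (by decide)).symm)) (by decide)
      · exact fun h => absurd (hr 3 (h.trans (hP 3 0 1 (by decide)).symm)) (by decide)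
      · exact fun h => absurd (hr 3 (h.trans (hP 3 1 2 (by decide)).symm)) (by decide)
      · exact fun h => absurd (hc 3 (h.trans t0.symm)) (by decide)
      · exact fun h => absurd (hc 3 (h.trans t1.symm)) (by decide)
    have h4 : L 4 3 = 3 ∨ L 4 3 = 4 := by
      refine key _ ?_ ?_ ?_ ?_ ?_
      · exact fun h => absurd (hr 4 (h.trans (hP 4 1 0 (by decide)).symm)) (by decide)
      · exact fun h => absurd (hr 4 (h.trans (hP 4 2 1 (by decide)).symm)) (by decide)
      · exact fun h => absurd (hr 4 (h.trans (hP 4 0 2 (by decide)).symm)) (by decide)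
      · exact fun h => absurd (hc 3 (h.trans t0.symm)) (by decide)
      · exact fun h => absurd (hc 3 (h.trans t1.symm)) (by decide)
    have d23 : L 2 3 ≠ L 3 3 := fun h => absurd (hc 3 h) (by decide)
    have d24 : L 2 3 ≠ L 4 3 := fun h => absurd (hc 3 h) (by decide)
    have d34 : L 3 3 ≠ L 4 3 := fun h => absurd (hc 3 h) (by decide)
    rcases h2 with h2 | h2 <;> rcases h3 with h3 | h3 <;> rcases h4 with h4 | h4 <;>
      simp_all
end

section
/- Let r, s ≤ n and let P be an n×n partial Latin square whose nonempty cells are exactly the cells (i,j) with 1 ≤ i ≤ r and 1 ≤ j ≤ s (all of which are filled), forming the r×s subrectangle Q. Then P is completable if and only if each of the symbols 1,…,n occurs at least r + s − n times among the cells of Q. -/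
open Finset

section Konig

variable {α : Type*} [Fintype α] [DecidableEq α]

theorem exists_perm_forall_pos_of_sum_eq {d : ℕ} (hd : 0 < d) (M : α → α → ℕ)
    (hrow : ∀ i, ∑ t, M i t = d) (hcol : ∀ t, ∑ i, M i t = d) :
    ∃ σ : Equiv.Perm α, ∀ i, 0 < M i (σ i) := by
  let A : α → Finset α := fun i => {t | 0 < M i t}
  have hall : ∀ S : Finset α, #S ≤ #(S.biUnion A) := by
    intro S
    refine Nat.le_of_mul_le_mul_right ?_ hd
    calc #S * d = ∑ i ∈ S, ∑ t ∈ A i, M i t := by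
          simp only [A, sum_filter_of_ne (fun t _ h => Nat.pos_of_ne_zero h), hrow,
            sum_const, smul_eq_mul]
      _ ≤ ∑ i ∈ S, ∑ t ∈ S.biUnion A, M i t :=
          sum_le_sum fun i hi => sum_le_sum_of_subset (subset_biUnion_of_mem A hi)
      _ = ∑ t ∈ S.biUnion A, ∑ i ∈ S, M i t := sum_comm
      _ ≤ ∑ t ∈ S.biUnion A, d :=
          sum_le_sum fun t _ => hcol t ▸ sum_le_sum_of_subset (subset_univ S)
      _ = #(S.biUnion A) * d := by rw [sum_const, smul_eq_mul]
  obtain ⟨f, hf, hfA⟩ := (all_card_le_biUnion_card_iff_exists_injective A).mp hall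
  exact ⟨Equiv.ofBijective f hf.bijective_of_finite, fun i => by simpa [A] using hfA i⟩

theorem exists_perms_card_filter_eq_of_sum_eq (d : ℕ) (M : α → α → ℕ)
    (hrow : ∀ i, ∑ t, M i t = d) (hcol : ∀ t, ∑ i, M i t = d) :
    ∃ σ : Fin d → Equiv.Perm α, ∀ i t, #{k | σ k i = t} = M i t := by
  induction d generalizing M with
  | zero =>
    refine ⟨Fin.elim0, fun i t => ?_⟩
    simpa using (sum_eq_zero_iff.mp (hrow i) t (mem_univ t)).symm
  | succ d ih =>
    obtain ⟨σ₀, hσ₀⟩ := exists_perm_forall_pos_of_sum_eq d.succ_pos M hrow hcol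
    let δ : α → α → ℕ := fun i t => if σ₀ i = t then 1 else 0
    have hδ : ∀ i t, δ i t ≤ M i t := fun i t => by
      by_cases h : σ₀ i = t
      · simpa [δ, h] using h ▸ hσ₀ i
      · simp [δ, h]
    obtain ⟨σ, hσ⟩ := ih (fun i t => M i t - δ i t)
      (fun i => by
        rw [sum_tsub_distrib _ fun t _ => hδ i t, hrow]
        simp [δ])
      (fun t => by
        rw [sum_tsub_distrib _ fun i _ => hδ i t, hcol]
        simp [δ, ← Equiv.eq_symm_apply])
    refine ⟨Fin.cons σ₀ σ, fun i t => ?_⟩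
    rw [Fin.card_filter_univ_succ']
    simp only [Fin.cons_zero, Fin.cons_succ, hσ]
    have := hδ i t
    simp only [δ] at this ⊢
    omega

variable {ι κ : Type*} [Fintype ι] [Fintype κ] [DecidableEq ι] [DecidableEq κ]

theorem exists_injective_coloring (d : ℕ) (M : ι → κ → ℕ)
    (hrow : ∀ i, ∑ t, M i t = d) (hcol : ∀ t, ∑ i, M i t ≤ d) :
    ∃ f : Fin d → ι → κ,
      (∀ k, Function.Injective (f k)) ∧ ∀ i t, #{k | f k i = t} = M i t := by
  -- `M` and its transpose off the diagonal, symbol degrees padded up to `d` on the diagonal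
  let N : ι ⊕ κ → ι ⊕ κ → ℕ
    | .inl i, .inr t => M i t
    | .inr t, .inl i => M i t
    | .inr t, .inr t' => if t = t' then d - ∑ i, M i t else 0
    | .inl _, .inl _ => 0
  have hN : ∀ x, ∑ y, N x y = d := by
    rintro (i | t)
    · simp [N, Fintype.sum_sum_type, hrow]
    · simp [N, Fintype.sum_sum_type]
      have := hcol t
      omega
  have hN_symm : ∀ x y, N x y = N y x := by
    rintro (i | t) (i' | t') <;> simp only [N]
    split_ifs <;> simp_all
  obtain ⟨σ, hσ⟩ := exists_perms_card_filter_eq_of_sum_eq d N hN fun y => by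
    simpa [hN_symm _ y] using hN y
  have hσ_inr : ∀ k i, ∃ t, σ k (.inl i) = .inr t := by
    intro k i
    rcases h : σ k (.inl i) with i' | t
    · have := hσ (.inl i) (.inl i')
      simp only [N, card_eq_zero, filter_eq_empty_iff] at this
      exact absurd h (this (mem_univ k))
    · exact ⟨t, rfl⟩
  choose f hf using hσ_inr
  refine ⟨f, fun k i i' h => ?_, fun i t => ?_⟩
  · exact Sum.inl_injective ((σ k).injective (by rw [hf, hf, h]))
  · simpa [hf] using hσ (.inl i) (.inr t)

end Konig

variable {n : ℕ}

/-- An `r × s` Latin rectangle in the upper left corner of `A`; the other entries are ignored. -/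
def IsLatinRect (r s : ℕ) (A : Fin n → Fin n → Fin n) : Prop :=
  (∀ i : Fin n, (i : ℕ) < r → Set.InjOn (A i) {j | (j : ℕ) < s}) ∧
    ∀ j : Fin n, (j : ℕ) < s → Set.InjOn (A · j) {i | (i : ℕ) < r}

def symbolCount (r s : ℕ) (A : Fin n → Fin n → Fin n) (t : Fin n) : ℕ :=
  #{p : Fin n × Fin n | (p.1 : ℕ) < r ∧ (p.2 : ℕ) < s ∧ A p.1 p.2 = t}

theorem Fin.card_filter_not_val_lt {s : ℕ} (hs : s ≤ n) :
    #{j : Fin n | ¬ (j : ℕ) < s} = n - s := by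
  have := card_filter_add_card_filter_not (s := univ) (p := fun j : Fin n => (j : ℕ) < s)
  rw [Fin.card_filter_val_lt, card_univ, Fintype.card_fin, min_eq_right hs] at this
  omega

theorem symbolCount_swap (r s : ℕ) (A : Fin n → Fin n → Fin n) (t : Fin n) :
    symbolCount s r (Function.swap A) t = symbolCount r s A t :=
  card_nbij' Prod.swap Prod.swap (by simp [Set.MapsTo]; tauto) (by simp [Set.MapsTo]; tauto)
    (fun _ _ => rfl) (fun _ _ => rfl)

theorem IsLatinSquare.isLatinRect {L : Fin n → Fin n → Fin n} (h : IsLatinSquare L)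
    (r s : ℕ) : IsLatinRect r s L :=
  ⟨fun i _ => (h.1 i).injOn, fun j _ => (h.2 j).injOn⟩

namespace IsLatinRect

variable {r s : ℕ} {A : Fin n → Fin n → Fin n}

theorem swap (h : IsLatinRect r s A) : IsLatinRect s r (Function.swap A) := ⟨h.2, h.1⟩

theorem isLatinSquare (h : IsLatinRect n n A) : IsLatinSquare A :=
  ⟨fun i j j' => h.1 i i.2 j.2 j'.2, fun j i i' => h.2 j j.2 i.2 i'.2⟩

theorem add_le_symbolCount (h : IsLatinRect r n A) (hr : r ≤ n) (hs : s ≤ n) (t : Fin n) :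
    r + s - n ≤ symbolCount r s A t := by
  let S : Finset (Fin n × Fin n) := {p | (p.1 : ℕ) < r ∧ A p.1 p.2 = t}
  have hS : r ≤ #S := by
    calc r = #{i : Fin n | (i : ℕ) < r} := by rw [Fin.card_filter_val_lt, min_eq_right hr]
      _ ≤ #S := card_le_card_of_surjOn Prod.fst fun i hi => by
        have hi : (i : ℕ) < r := by simpa using hi
        obtain ⟨j, hj⟩ := Finite.injective_iff_surjective.mp
          (fun j j' => h.1 i hi j.2 j'.2) t
        exact ⟨(i, j), by simp [S, hi, hj], rfl⟩
  have hS_right : #{p ∈ S | ¬ (p.2 : ℕ) < s} ≤ n - s := by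
    calc #{p ∈ S | ¬ (p.2 : ℕ) < s} ≤ #{j : Fin n | ¬ (j : ℕ) < s} :=
          card_le_card_of_injOn Prod.snd (fun p hp => by simp_all) fun p hp q hq hpq => by
            simp only [S, coe_filter, mem_filter, mem_univ, true_and, Set.mem_ofPred_eq] at hp hq
            exact Prod.ext (h.2 p.2 p.2.2 hp.1.1 hq.1.1 (by simp_all)) hpq
      _ = n - s := Fin.card_filter_not_val_lt hs
  have hS_left : #{p ∈ S | (p.2 : ℕ) < s} = symbolCount r s A t := by
    simp only [S, symbolCount, filter_filter]
    congr
    ext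
    tauto
  have := card_filter_add_card_filter_not (s := S) (p := fun p => (p.2 : ℕ) < s)
  omega

theorem exists_new_columns (h : IsLatinRect r s A) (hr : r ≤ n) (hs : s ≤ n)
    (hcount : ∀ t, r + s - n ≤ symbolCount r s A t) :
    ∃ f : Fin (n - s) → {i : Fin n // (i : ℕ) < r} → Fin n,
      (∀ k, Function.Injective (f k)) ∧ (∀ k k' i, f k i = f k' i → k = k') ∧
        ∀ k i (j : Fin n), (j : ℕ) < s → f k i ≠ A i j := by
  let row (i : Fin n) : Finset (Fin n) := ({j | (j : ℕ) < s} : Finset (Fin n)).image (A i)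
  have mem_row {i t} : t ∈ row i ↔ ∃ j : Fin n, (j : ℕ) < s ∧ A i j = t := by simp [row]
  let M (i : Fin n) (t : Fin n) : ℕ := if t ∈ row i then 0 else 1
  have hrow : ∀ i : {i : Fin n // (i : ℕ) < r}, ∑ t, M i t = n - s := by
    intro i
    have : #(row i) = s := by
      rw [card_image_of_injOn (by simpa using h.1 i i.2), Fin.card_filter_val_lt,
        min_eq_right hs]
    simp only [M, sum_ite, sum_const_zero, zero_add, sum_const, smul_eq_mul, mul_one,
      filter_notMem_eq_sdiff, card_univ_sdiff, Fintype.card_fin, this]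
  have hcol : ∀ t, ∑ i : {i : Fin n // (i : ℕ) < r}, M i t ≤ n - s := by
    intro t
    rw [← sum_subtype {i : Fin n | (i : ℕ) < r} (by simp) (M · t)]
    have hcard :=
      card_filter_add_card_filter_not (s := {i : Fin n | (i : ℕ) < r}) (p := (t ∈ row ·))
    have hocc : symbolCount r s A t ≤ #{i ∈ {i : Fin n | (i : ℕ) < r} | t ∈ row i} :=
      card_le_card_of_injOn Prod.fst
        (fun p hp => by
          simp only [coe_filter, mem_filter, mem_univ, true_and, Set.mem_ofPred_eq] at hp ⊢
          exact ⟨hp.1, mem_row.mpr ⟨p.2, hp.2⟩⟩)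
        fun p hp q hq hpq => by
          simp only [coe_filter, mem_univ, true_and, Set.mem_ofPred_eq] at hp hq
          exact Prod.ext hpq (h.1 p.1 hp.1 hp.2.1 hq.2.1 (by simp_all))
    rw [Fin.card_filter_val_lt, min_eq_right hr] at hcard
    have := hcount t
    simp only [M, sum_ite, sum_const_zero, sum_const, smul_eq_mul, mul_one, zero_add]
    omega
  obtain ⟨f, hf_inj, hf_card⟩ :=
    exists_injective_coloring (n - s) (fun i : {i : Fin n // (i : ℕ) < r} => M i) hrow hcol
  have hf_missing : ∀ k (i : {i : Fin n // (i : ℕ) < r}), f k i ∉ row i := fun k i hk => by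
    have := hf_card i (f k i)
    simp only [M, hk, if_true, card_eq_zero, filter_eq_empty_iff] at this
    exact this (mem_univ k) rfl
  refine ⟨f, hf_inj, fun k k' i hkk' => ?_,
    fun k i j hj hA => hf_missing k i (mem_row.mpr ⟨j, hj, hA.symm⟩)⟩
  have : #{k | f k i = f k' i} ≤ 1 := by
    rw [hf_card]; simp only [M]; split_ifs <;> simp
  exact card_le_one.mp this k (by simp [hkk']) k' (by simp)

theorem exists_extend_columns (h : IsLatinRect r s A) (hr : r ≤ n) (hs : s ≤ n)
    (hcount : ∀ t, r + s - n ≤ symbolCount r s A t) :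
    ∃ B, IsLatinRect r n B ∧ ∀ i j : Fin n, (j : ℕ) < s → B i j = A i j := by
  obtain ⟨f, hf_inj, hf_row, hf_new⟩ := h.exists_new_columns hr hs hcount
  let e : {j : Fin n // ¬ (j : ℕ) < s} ≃ Fin (n - s) :=
    Fintype.equivFinOfCardEq (by rw [Fintype.card_subtype, Fin.card_filter_not_val_lt hs])
  let B (i j : Fin n) : Fin n :=
    if hij : (i : ℕ) < r ∧ ¬ (j : ℕ) < s then f (e ⟨j, hij.2⟩) ⟨i, hij.1⟩ else A i j
  have hB_old : ∀ i j : Fin n, (j : ℕ) < s → B i j = A i j :=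
    fun i j hj => dif_neg fun hij => hij.2 hj
  have hB_new : ∀ (i j : Fin n) (hi : (i : ℕ) < r) (hj : ¬ (j : ℕ) < s),
      B i j = f (e ⟨j, hj⟩) ⟨i, hi⟩ :=
    fun i j hi hj => dif_pos ⟨hi, hj⟩
  refine ⟨B, ⟨fun i hi j _ j' _ hjj' => ?_,
    fun j _ i hi i' hi' (hii' : B i j = B i' j) => ?_⟩, hB_old⟩
  · by_cases hj : (j : ℕ) < s <;> by_cases hj' : (j' : ℕ) < s
    · rw [hB_old i j hj, hB_old i j' hj'] at hjj'
      exact h.1 i hi hj hj' hjj'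
    · rw [hB_old i j hj, hB_new i j' hi hj'] at hjj'
      exact absurd hjj'.symm (hf_new _ _ j hj)
    · rw [hB_new i j hi hj, hB_old i j' hj'] at hjj'
      exact absurd hjj' (hf_new _ _ j' hj')
    · rw [hB_new i j hi hj, hB_new i j' hi hj'] at hjj'
      simpa using e.injective (hf_row _ _ _ hjj')
  · by_cases hj : (j : ℕ) < s
    · rw [hB_old i j hj, hB_old i' j hj] at hii'
      exact h.2 j hj hi hi' hii'
    · rw [hB_new i j hi hj, hB_new i' j hi' hj] at hii'
      simpa using hf_inj _ hii'

theorem exists_isLatinSquare (h : IsLatinRect r n A) (hr : r ≤ n) :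
    ∃ L, IsLatinSquare L ∧ ∀ i j : Fin n, (i : ℕ) < r → L i j = A i j := by
  have hcount : ∀ t, n + r - n ≤ symbolCount n r (Function.swap A) t := fun t => by
    simpa [symbolCount_swap, Nat.add_comm n r] using h.add_le_symbolCount hr le_rfl t
  obtain ⟨C, hC, hCA⟩ := h.swap.exists_extend_columns le_rfl hr hcount
  exact ⟨Function.swap C, hC.swap.isLatinSquare, fun i j hi => hCA j i hi⟩

theorem exists_isLatinSquare_of_add_le_symbolCount (h : IsLatinRect r s A) (hr : r ≤ n)
    (hs : s ≤ n) (hcount : ∀ t, r + s - n ≤ symbolCount r s A t) :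
    ∃ L, IsLatinSquare L ∧
      ∀ i j : Fin n, (i : ℕ) < r → (j : ℕ) < s → L i j = A i j := by
  obtain ⟨B, hB, hBA⟩ := h.exists_extend_columns hr hs hcount
  obtain ⟨L, hL, hLB⟩ := hB.exists_isLatinSquare hr
  exact ⟨L, hL, fun i j hi hj => (hLB i j hi).trans (hBA i j hj)⟩

end IsLatinRect

section PartialLatinSquare

variable {r s : ℕ} {P : Fin n → Fin n → Option (Fin n)} {A : Fin n → Fin n → Fin n}

theorem isLatinRect_of_eq_some (hP : IsPartialLatinSquare P)
    (hA : ∀ i j : Fin n, (i : ℕ) < r → (j : ℕ) < s → P i j = some (A i j)) :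
    IsLatinRect r s A :=
  ⟨fun i hi j hj j' hj' hjj' => hP.1 i j j' _ (hA i j hi hj) (hjj' ▸ hA i j' hi hj'),
    fun j hj i hi i' hi' (hii' : A i j = A i' j) =>
      hP.2 i i' j _ (hA i j hi hj) (hii' ▸ hA i' j hi' hj)⟩

theorem card_filter_eq_some_eq_symbolCount
    (hfill : ∀ i j : Fin n, P i j ≠ none ↔ ((i : ℕ) < r ∧ (j : ℕ) < s))
    (hA : ∀ i j : Fin n, (i : ℕ) < r → (j : ℕ) < s → P i j = some (A i j)) (t : Fin n) :
    #{p : Fin n × Fin n | P p.1 p.2 = some t} = symbolCount r s A t := by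
  refine congrArg card <| filter_congr fun p _ =>
    ⟨fun hp => ?_, fun ⟨hi, hj, hAt⟩ => hAt ▸ hA _ _ hi hj⟩
  obtain ⟨hi, hj⟩ := (hfill p.1 p.2).mp (by simp [hp])
  exact ⟨hi, hj, Option.some_injective _ ((hA _ _ hi hj).symm.trans hp)⟩

end PartialLatinSquare

/-- (Ryser) Let `r, s ≤ n` and let `P` be an `n × n` partial Latin square whose filled
cells are exactly those of the upper-left `r × s` rectangle. Then `P` is completable if
and only if every symbol occurs at least `r + s - n` times in that rectangle. -/
theorem stmt_13 (n r s : ℕ) (hr : r ≤ n) (hs : s ≤ n)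
    (P : Fin n → Fin n → Option (Fin n))
    (hP : IsPartialLatinSquare P)
    (hfill : ∀ i j : Fin n, P i j ≠ none ↔ (i.val < r ∧ j.val < s)) :
    Completable P ↔
      ∀ t : Fin n,
        r + s - n ≤ (Finset.univ.filter fun p : Fin n × Fin n => P p.1 p.2 = some t).card := by
  constructor
  · rintro ⟨L, hL, hLP⟩ t
    have hA : ∀ i j : Fin n, (i : ℕ) < r → (j : ℕ) < s → P i j = some (L i j) := by
      intro i j hi hj
      obtain ⟨u, hu⟩ := Option.ne_none_iff_exists'.mp ((hfill i j).mpr ⟨hi, hj⟩)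
      rw [hu, hLP i j u hu]
    rw [card_filter_eq_some_eq_symbolCount hfill hA]
    exact (hL.isLatinRect r n).add_le_symbolCount hr hs t
  · intro hcount
    -- the default `i` is only there to avoid the case `n = 0`
    let A (i j : Fin n) : Fin n := (P i j).getD i
    have hA : ∀ i j : Fin n, (i : ℕ) < r → (j : ℕ) < s → P i j = some (A i j) := by
      intro i j hi hj
      obtain ⟨u, hu⟩ := Option.ne_none_iff_exists'.mp ((hfill i j).mpr ⟨hi, hj⟩)
      simp [A, hu]
    obtain ⟨L, hL, hLA⟩ :=
      (isLatinRect_of_eq_some hP hA).exists_isLatinSquare_of_add_le_symbolCount hr hs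
        fun t => card_filter_eq_some_eq_symbolCount hfill hA t ▸ hcount t
    refine ⟨L, hL, fun i j u hu => ?_⟩
    obtain ⟨hi, hj⟩ := (hfill i j).mp (by simp [hu])
    exact Option.some_injective _ ((hLA i j hi hj ▸ hA i j hi hj).symm.trans hu)
end

section
/- Let n ≥ 9, let P ∈ PLS(2,3;n), and let α be a symbol that does not occur in the 2×3 upper-left subarray of P (the intersection of the two filled rows and three filled columns). Let j, k, l ∈ {3,…,n} be the rows with P(j,1) = α, P(k,2) = α and P(l,3) = α. Then there exists i ∈ {3,…,n} such that the symbols P(i,1), P(j,2), P(j,3) are pairwise distinct, the symbols P(k,1), P(i,2), P(k,3) are pairwise distinct, and the symbols P(l,1), P(l,2), P(i,3) are pairwise distinct (equivalently, row i replaces α). -/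
/-!
Each of the six requirements `P i c ≠ P r c'` (with `r ∈ {j, k, l}` and `c ≠ c'`) concerns a filled
cell, so by the column condition it excludes at most one row `i`; the remaining three requirements
are instances of the row condition. Since `n ≥ 9`, at least seven rows `i` with `2 ≤ i.val` are available.
-/

open Finset

namespace IsPartialLatinSquare

variable {n : ℕ} {P : Fin n → Fin n → Option (Fin n)}

theorem ne_of_ne_col (hP : IsPartialLatinSquare P) {r c c' : Fin n} (hc : P r c ≠ none)
    (hcc' : c ≠ c') : P r c ≠ P r c' := by
  obtain ⟨s, hs⟩ := Option.ne_none_iff_exists'.mp hc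
  exact fun h => hcc' (hP.1 r c c' s hs (h ▸ hs))

theorem card_filter_col_eq_le_one (hP : IsPartialLatinSquare P) (c : Fin n)
    {v : Option (Fin n)} (hv : v ≠ none) : #{i | P i c = v} ≤ 1 := by
  obtain ⟨s, rfl⟩ := Option.ne_none_iff_exists'.mp hv
  exact card_le_one.mpr fun a ha b hb =>
    hP.2 a b c s (mem_filter.mp ha).2 (mem_filter.mp hb).2

theorem exists_row_avoiding (hP : IsPartialLatinSquare P) {R : Finset (Fin n)}
    {F : Finset (Fin n × Option (Fin n))} (hF : ∀ p ∈ F, p.2 ≠ none) (hcard : #F < #R) :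
    ∃ i ∈ R, ∀ p ∈ F, P i p.1 ≠ p.2 := by
  have hexcluded : #(F.biUnion fun p => {i | P i p.1 = p.2}) ≤ #F :=
    calc _ ≤ ∑ p ∈ F, #{i | P i p.1 = p.2} := card_biUnion_le
      _ ≤ ∑ _p ∈ F, 1 := sum_le_sum fun p hp => hP.card_filter_col_eq_le_one p.1 (hF p hp)
      _ = #F := by simp
  obtain ⟨i, hiR, hi⟩ := exists_mem_notMem_of_card_lt_card (hexcluded.trans_lt hcard)
  exact ⟨i, hiR, fun p hp h => hi (mem_biUnion.mpr ⟨p, hp, mem_filter.mpr ⟨mem_univ i, h⟩⟩)⟩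

end IsPartialLatinSquare

theorem stmt_15 (n : ℕ) (hn : 9 ≤ n)
    (P : Fin n → Fin n → Option (Fin n))
    (hP : IsPartialLatinSquare P)
    (hfill : ∀ i j : Fin n, P i j ≠ none ↔ (i.val < 2 ∨ j.val < 3))
    (j k l : Fin n) :
    ∃ i : Fin n, 2 ≤ i.val ∧
      (P i ⟨0, by omega⟩ ≠ P j ⟨1, by omega⟩ ∧
        P i ⟨0, by omega⟩ ≠ P j ⟨2, by omega⟩ ∧
        P j ⟨1, by omega⟩ ≠ P j ⟨2, by omega⟩) ∧
      (P k ⟨0, by omega⟩ ≠ P i ⟨1, by omega⟩ ∧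
        P k ⟨0, by omega⟩ ≠ P k ⟨2, by omega⟩ ∧
        P i ⟨1, by omega⟩ ≠ P k ⟨2, by omega⟩) ∧
      (P l ⟨0, by omega⟩ ≠ P l ⟨1, by omega⟩ ∧
        P l ⟨0, by omega⟩ ≠ P i ⟨2, by omega⟩ ∧
        P l ⟨1, by omega⟩ ≠ P i ⟨2, by omega⟩) := by
  have filled (r c : Fin n) (hc : c.val < 3) : P r c ≠ none := (hfill r c).mpr (Or.inr hc)
  let c₀ : Fin n := ⟨0, by omega⟩
  let c₁ : Fin n := ⟨1, by omega⟩
  let c₂ : Fin n := ⟨2, by omega⟩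
  obtain ⟨i, hi, hiF⟩ := hP.exists_row_avoiding (R := Ici c₂)
    (F := {(c₀, P j c₁), (c₀, P j c₂), (c₁, P k c₀), (c₁, P k c₂), (c₂, P l c₀), (c₂, P l c₁)})
    (by simp only [mem_insert, mem_singleton]; rintro _ (rfl | rfl | rfl | rfl | rfl | rfl) <;>
      exact filled _ _ (by simp [c₀, c₁, c₂]))
    (card_le_six.trans_lt (by simp [c₂]; omega))
  simp only [mem_insert, mem_singleton, forall_eq_or_imp, forall_eq] at hiF
  obtain ⟨h₁, h₂, h₃, h₄, h₅, h₆⟩ := hiF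
  have h01 : c₀ ≠ c₁ := by simp [c₀, c₁, Fin.ext_iff]
  have h02 : c₀ ≠ c₂ := by simp [c₀, c₂, Fin.ext_iff]
  have h12 : c₁ ≠ c₂ := by simp [c₁, c₂, Fin.ext_iff]
  refine ⟨i, Fin.le_def.mp (mem_Ici.mp hi),
    ⟨h₁, h₂, hP.ne_of_ne_col (filled j c₁ (by simp [c₁])) h12⟩,
    ⟨h₃.symm, hP.ne_of_ne_col (filled k c₀ (by simp [c₀])) h02, h₄⟩,
    ⟨hP.ne_of_ne_col (filled l c₀ (by simp [c₀])) h01, h₅.symm, h₆.symm⟩⟩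
end
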